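/- arXiv:0707.3010 — 11 statements merged into one kernel-verified Lean document; each statement's English description precedes it below -/
import Mathlib

section
/- Let d ≥ 2 be an integer and let 0 ≤ k ≤ d−2. For all real numbers x, y, writing z = x + iy and setting p_k = (x−k)² + y², r_k = (x−k−1+d)² + y², and q_k = p_k + r_k − d(d−1), the following three-term syzygy holds among consecutive binomial coefficient basis polynomials: p_k · C_d(z+d−k) − q_k · C_d(z+d−k−1) + r_k · C_d(z+d−k−2) = 0. -/
open ComplexConjugate

/-- The binomial coefficient polynomial `C_d(w) = (1/d!) ∏_{i=0}^{d-1} (w - i)`. -/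
noncomputable def binomC (d : ℕ) (w : ℂ) : ℂ :=
  (∏ i ∈ Finset.range d, (w - i)) / (Nat.factorial d)

lemma pA (m : ℕ) (w : ℂ) :
    ∏ i ∈ Finset.range (m+2), (w - i) = w * (w-1) * ∏ i ∈ Finset.range m, (w - 2 - i) := by
  rw [Finset.prod_range_succ', Finset.prod_range_succ',
    Finset.prod_congr rfl (fun i _ => by push_cast; ring :
      ∀ i ∈ Finset.range m, w - ((i+1+1 : ℕ):ℂ) = w - 2 - i)]
  push_cast; ring

lemma pB (m : ℕ) (w : ℂ) :
    ∏ i ∈ Finset.range (m+2), (w - 1 - i)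
      = (w-1) * (w - (m+2)) * ∏ i ∈ Finset.range m, (w - 2 - i) := by
  rw [Finset.prod_range_succ, Finset.prod_range_succ',
    Finset.prod_congr rfl (fun i _ => by push_cast; ring :
      ∀ i ∈ Finset.range m, w - 1 - ((i+1 : ℕ):ℂ) = w - 2 - i)]
  push_cast; ring

lemma pC (m : ℕ) (w : ℂ) :
    ∏ i ∈ Finset.range (m+2), (w - 2 - i)
      = (w - (m+2)) * (w - (m+2) - 1) * ∏ i ∈ Finset.range m, (w - 2 - i) := by
  rw [Finset.prod_range_succ, Finset.prod_range_succ]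
  push_cast; ring

/-- Three-term syzygy among consecutive binomial coefficient basis polynomials. -/
theorem stmt_0 (d k : ℕ) (hd : 2 ≤ d) (hk : k ≤ d - 2) (x y : ℝ) :
    (((x - k) ^ 2 + y ^ 2 : ℝ) : ℂ) * binomC d ((x + y * Complex.I) + d - k)
      - ((((x - k) ^ 2 + y ^ 2) + ((x - k - 1 + d) ^ 2 + y ^ 2) - (d : ℝ) * ((d : ℝ) - 1) : ℝ) : ℂ)
          * binomC d ((x + y * Complex.I) + d - k - 1)
      + (((x - k - 1 + d) ^ 2 + y ^ 2 : ℝ) : ℂ) * binomC d ((x + y * Complex.I) + d - k - 2)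
      = 0 := by
  obtain ⟨m, rfl⟩ : ∃ m, d = m + 2 := ⟨d - 2, by omega⟩
  simp only [binomC]
  rw [pA m ((x:ℂ) + y * Complex.I + ((m+2 : ℕ):ℂ) - k),
      pB m ((x:ℂ) + y * Complex.I + ((m+2 : ℕ):ℂ) - k),
      pC m ((x:ℂ) + y * Complex.I + ((m+2 : ℕ):ℂ) - k)]
  set Q := ∏ i ∈ Finset.range m, ((x:ℂ) + y * Complex.I + ((m+2 : ℕ):ℂ) - k - 2 - i) with hQ
  set F := ((Nat.factorial (m+2) : ℕ) : ℂ) with hF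
  have h1 : ((x:ℂ) - k)^2 + (y:ℂ)^2
      = ((x:ℂ) + y*Complex.I - k) * ((x:ℂ) - y*Complex.I - k) := by
    linear_combination (y:ℂ)^2 * Complex.I_sq
  have h2 : ((x:ℂ) - k - 1 + ((m:ℂ)+2))^2 + (y:ℂ)^2
      = ((x:ℂ) + y*Complex.I - k - 1 + ((m:ℂ)+2)) * ((x:ℂ) - y*Complex.I - k - 1 + ((m:ℂ)+2)) := by
    linear_combination (y:ℂ)^2 * Complex.I_sq
  push_cast
  linear_combination
    (((x:ℂ) + y*Complex.I + ((m:ℂ)+2) - k) * ((x:ℂ) + y*Complex.I + ((m:ℂ)+2) - k - 1) * Q / F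
      - ((x:ℂ) + y*Complex.I + ((m:ℂ)+2) - k - 1) * ((x:ℂ) + y*Complex.I - k) * Q / F) * h1
    + (((x:ℂ) + y*Complex.I - k) * ((x:ℂ) + y*Complex.I - k - 1) * Q / F
      - ((x:ℂ) + y*Complex.I + ((m:ℂ)+2) - k - 1) * ((x:ℂ) + y*Complex.I - k) * Q / F) * h2
end

section
/- Let 0 ≤ j < k be integers and x, y real numbers; write z = x + iy and z̄ = x − iy. (a) Let D_{j,k} be the tridiagonal determinant built from p_m = (x−m)² + y², q_m = 2(x−m) − 1, r_m = 1. Then (z − z̄) · (−1)^{k−j−1} · D_{j,k} = ∏_{m=j}^{k−1}(z − m) − ∏_{m=j}^{k−1}(z̄ − m). (b) Let D'_{j,k} be the tridiagonal determinant built from p_m = (x+m)² + y², q_m = 2(x+m) + 1, r_m = 1. Then (z − z̄) · (−1)^{k−j−1} · D'_{j,k} = ∏_{m=j}^{k−1}(z + m) − ∏_{m=j}^{k−1}(z̄ + m). -/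
/-!
Expanding along the first row gives `D_{j,k} = -q_j D_{j+1,k} - p_{j+1} r_j D_{j+2,k}`.
For `p_m = f_m² - w²`, `q_m = f_m + f_{m+1}` and `r_m = 1`, the difference
`∏_{m=j}^{k-1} (f_m + w) - ∏_{m=j}^{k-1} (f_m - w)` satisfies the same recurrence as
`2w (-1)^(k-j-1) D_{j,k}`, since `p_m = (f_m + w)(f_m - w)`; so the two agree by two-step
induction on `k - j`. Both factorial bases are instances, with `w = iy` (so that `z - z̄ = 2w`)
and `f_m = x - m`, resp. `f_m = x + m`.
-/

open ComplexConjugate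

/-- The `n × n` tridiagonal matrix with diagonal `-q j, …, -q (j+n-1)`,
superdiagonal `p (j+1), …, p (j+n-1)` and subdiagonal `r j, …, r (j+n-2)`. -/
def tridiag {R : Type*} [CommRing R] (p q r : ℕ → R) (j n : ℕ) :
    Matrix (Fin n) (Fin n) R :=
  Matrix.of fun a b =>
    if (a : ℕ) = b then -q (j + a)
    else if (a : ℕ) + 1 = b then p (j + b)
    else if (b : ℕ) + 1 = a then r (j + b)
    else 0

/-- The tridiagonal determinant `D_{j,k}` (with the convention `D_{j,j+1} = 1`). -/
def Dtri {R : Type*} [CommRing R] (p q r : ℕ → R) (j k : ℕ) : R :=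
  (tridiag p q r j (k - j - 1)).det

open Finset Matrix

section Tridiagonal

variable {R : Type*} [CommRing R] (p q r : ℕ → R)

theorem tridiag_submatrix_succ (j n : ℕ) :
    (tridiag p q r j (n + 1)).submatrix Fin.succ Fin.succ = tridiag p q r (j + 1) n := by
  ext a b
  simp only [tridiag, submatrix_apply, of_apply, Fin.val_succ, add_left_inj, ← add_assoc,
    add_right_comm j 1]

theorem tridiag_zero_zero (j n : ℕ) : tridiag p q r j (n + 1) 0 0 = -q j := by
  simp [tridiag]

theorem tridiag_zero_one (j n : ℕ) : tridiag p q r j (n + 2) 0 1 = p (j + 1) := by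
  simp [tridiag]

theorem tridiag_one_zero (j n : ℕ) : tridiag p q r j (n + 2) 1 0 = r j := by
  simp [tridiag]

theorem tridiag_zero_succ_succ (j n : ℕ) (b : Fin n) :
    tridiag p q r j (n + 2) 0 b.succ.succ = 0 := by
  simp [tridiag]

theorem tridiag_succ_succ_zero (j n : ℕ) (a : Fin n) :
    tridiag p q r j (n + 2) a.succ.succ 0 = 0 := by
  simp [tridiag]

theorem det_tridiag_submatrix_succ_succAbove_one (j n : ℕ) :
    ((tridiag p q r j (n + 2)).submatrix Fin.succ (Fin.succAbove 1)).det
      = r j * (tridiag p q r (j + 2) n).det := by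
  have hminor : ((tridiag p q r j (n + 2)).submatrix Fin.succ (Fin.succAbove 1)).submatrix
      (Fin.succAbove 0) Fin.succ = tridiag p q r (j + 2) n := by
    rw [← tridiag_submatrix_succ, ← tridiag_submatrix_succ]
    ext a b
    rw [← Fin.succ_zero_eq_one]
    simp only [submatrix_apply, Fin.succAbove_zero, Fin.succ_succAbove_succ]
  rw [det_succ_column_zero, Fin.sum_univ_succ,
    sum_eq_zero fun a _ => by simp [tridiag_succ_succ_zero], add_zero, hminor]
  simp [tridiag_one_zero]

theorem det_tridiag_add_two (j n : ℕ) :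
    (tridiag p q r j (n + 2)).det
      = -q j * (tridiag p q r (j + 1) (n + 1)).det
        - p (j + 1) * r j * (tridiag p q r (j + 2) n).det := by
  rw [det_succ_row_zero, Fin.sum_univ_succ, Fin.sum_univ_succ,
    sum_eq_zero fun b _ => by simp [tridiag_zero_succ_succ], add_zero,
    Fin.succAbove_zero, tridiag_submatrix_succ, Fin.succ_zero_eq_one,
    det_tridiag_submatrix_succ_succAbove_one, tridiag_zero_zero, tridiag_zero_one]
  simp only [Fin.val_zero, Fin.val_one, pow_zero, pow_one]
  ring

theorem tridiag_map {S : Type*} [CommRing S] (φ : R →+* S) (j n : ℕ) :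
    (tridiag p q r j n).map φ = tridiag (φ ∘ p) (φ ∘ q) (φ ∘ r) j n := by
  ext a b
  simp only [tridiag, map_apply, of_apply, Function.comp_apply]
  split_ifs <;> simp

theorem map_Dtri {S : Type*} [CommRing S] (φ : R →+* S) (j k : ℕ) :
    φ (Dtri p q r j k) = Dtri (φ ∘ p) (φ ∘ q) (φ ∘ r) j k := by
  rw [Dtri, RingHom.map_det, RingHom.mapMatrix_apply, tridiag_map, Dtri]

end Tridiagonal

section DifferenceOfProducts

variable {R : Type*} [CommRing R] (f : ℕ → R) (w : R)

theorem two_mul_neg_one_pow_mul_det_tridiag (n j : ℕ) :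
    2 * w * (-1) ^ n *
        (tridiag (fun m => f m ^ 2 - w ^ 2) (fun m => f m + f (m + 1)) (fun _ => 1) j n).det
      = ∏ m ∈ Ico j (j + n + 1), (f m + w) - ∏ m ∈ Ico j (j + n + 1), (f m - w) := by
  induction n using Nat.twoStepInduction generalizing j with
  | zero =>
    simp only [pow_zero, mul_one, det_fin_zero, add_zero, Nat.Ico_succ_singleton, prod_singleton]
    ring
  | one =>
    simp only [tridiag, det_unique, Fin.default_eq_zero, of_apply, Fin.val_zero, ↓reduceIte,
      add_zero, prod_Ico_succ_top (Nat.le_add_right j 1), Nat.Ico_succ_singleton, prod_singleton]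
    ring
  | more n ih₀ ih₁ =>
    have hpeel (g : ℕ → R) : ∏ m ∈ Ico j (j + (n + 2) + 1), g m
        = g j * g (j + 1) * ∏ m ∈ Ico (j + 2) (j + 2 + n + 1), g m := by
      rw [show j + (n + 2) + 1 = j + 2 + n + 1 by omega, prod_eq_prod_Ico_succ_bot (by omega),
        prod_eq_prod_Ico_succ_bot (by omega), mul_assoc]
    have hpeel₁ (g : ℕ → R) : ∏ m ∈ Ico (j + 1) (j + 1 + (n + 1) + 1), g m
        = g (j + 1) * ∏ m ∈ Ico (j + 2) (j + 2 + n + 1), g m := by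
      rw [show j + 1 + (n + 1) + 1 = j + 2 + n + 1 by omega, prod_eq_prod_Ico_succ_bot (by omega)]
    have e₁ := ih₁ (j + 1)
    have e₀ := ih₀ (j + 2)
    rw [hpeel₁, hpeel₁] at e₁
    rw [det_tridiag_add_two, hpeel, hpeel]
    linear_combination (f j + f (j + 1)) * e₁ - (f (j + 1) ^ 2 - w ^ 2) * e₀

theorem two_mul_neg_one_pow_mul_Dtri {j k : ℕ} (hjk : j < k) :
    2 * w * (-1) ^ (k - j - 1) *
        Dtri (fun m => f m ^ 2 - w ^ 2) (fun m => f m + f (m + 1)) (fun _ => 1) j k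
      = ∏ m ∈ Ico j k, (f m + w) - ∏ m ∈ Ico j k, (f m - w) := by
  obtain ⟨n, rfl⟩ := Nat.exists_eq_add_of_lt hjk
  rw [Dtri, show j + n + 1 - j - 1 = n by omega]
  exact two_mul_neg_one_pow_mul_det_tridiag f w n j

end DifferenceOfProducts

open Complex in
theorem two_mul_I_mul_Dtri_ofReal (f p q : ℕ → ℝ) (y : ℝ)
    (hp : ∀ m, p m = f m ^ 2 + y ^ 2) (hq : ∀ m, q m = f m + f (m + 1)) {j k : ℕ} (hjk : j < k) :
    2 * (y * I) * (-1) ^ (k - j - 1) * ((Dtri p q (fun _ => 1) j k : ℝ) : ℂ)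
      = ∏ m ∈ Ico j k, ((f m : ℂ) + y * I) - ∏ m ∈ Ico j k, ((f m : ℂ) - y * I) := by
  have hp' : ofRealHom ∘ p = fun m => (f m : ℂ) ^ 2 - (y * I) ^ 2 := by
    ext m; simp [hp, mul_pow]
  have hq' : ofRealHom ∘ q = fun m => (f m : ℂ) + f (m + 1) := by
    ext m; simp [hq]
  have hr' : ofRealHom ∘ (fun _ : ℕ => (1 : ℝ)) = fun _ => (1 : ℂ) := by
    ext m; simp
  rw [← ofRealHom_eq_coe (Dtri _ _ _ _ _), map_Dtri, hp', hq', hr']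
  exact two_mul_neg_one_pow_mul_Dtri _ _ hjk

/-- Proposition 2.4 for the falling factorial basis (a) and rising factorial basis (b). -/
theorem stmt_4 (j k : ℕ) (hjk : j < k) (x y : ℝ) :
    (((x + y * Complex.I) - conj (x + y * Complex.I)) * (-1) ^ (k - j - 1) *
        ((Dtri (fun m => (x - m) ^ 2 + y ^ 2) (fun m => 2 * (x - m) - 1)
            (fun _ => (1 : ℝ)) j k : ℝ) : ℂ)
      = (∏ m ∈ Finset.Icc j (k - 1), ((x + y * Complex.I) - m))
        - (∏ m ∈ Finset.Icc j (k - 1), (conj (x + y * Complex.I) - m)))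
    ∧
    (((x + y * Complex.I) - conj (x + y * Complex.I)) * (-1) ^ (k - j - 1) *
        ((Dtri (fun m => (x + m) ^ 2 + y ^ 2) (fun m => 2 * (x + m) + 1)
            (fun _ => (1 : ℝ)) j k : ℝ) : ℂ)
      = (∏ m ∈ Finset.Icc j (k - 1), ((x + y * Complex.I) + m))
        - (∏ m ∈ Finset.Icc j (k - 1), (conj (x + y * Complex.I) + m))) := by
  have hconj : conj ((x : ℂ) + y * Complex.I) = x - y * Complex.I := by
    simp [sub_eq_add_neg]
  have hIcc : Icc j (k - 1) = Ico j k :=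
    Icc_sub_one_right_eq_Ico_of_not_isMin (by rw [isMin_iff_eq_bot]; exact hjk.ne_bot) j
  rw [hconj, hIcc, add_sub_sub_cancel, ← two_mul]
  constructor
  · rw [two_mul_I_mul_Dtri_ofReal (fun m => x - m) _ _ y (fun _ => rfl)
      (fun m => by push_cast; ring) hjk]
    push_cast
    simp only [add_sub_right_comm, sub_right_comm]
  · rw [two_mul_I_mul_Dtri_ofReal (fun m => x + m) _ _ y (fun _ => rfl)
      (fun m => by push_cast; ring) hjk]
    push_cast
    simp only [add_right_comm, sub_add_eq_add_sub]
end

section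
/- Let d ≥ 1 and 0 ≤ j < k ≤ d be integers, and x, y real numbers; write z = x + iy and z̄ = x − iy. Let D_{j,k} be the tridiagonal determinant built from p_m = (x−m)² + y², r_m = (x−m−1+d)² + y², and q_m = p_m + r_m − d(d−1). Then d · (z − z̄) · (−1)^{k−j−1} · D_{j,k} = ∏_{m=j}^{k−1}(z − m) · ∏_{m=j}^{k−1}(z̄ + d − m) − ∏_{m=j}^{k−1}(z̄ − m) · ∏_{m=j}^{k−1}(z + d − m). -/
open ComplexConjugate

lemma tridiag_det_rec {R : Type*} [CommRing R] (p q r : ℕ → R) (j n : ℕ) :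
    (tridiag p q r j (n + 2)).det
      = -q j * (tridiag p q r (j + 1) (n + 1)).det
        - p (j + 1) * r j * (tridiag p q r (j + 2) n).det := by
  have hadd1 : ∀ m : ℕ, j + 1 + m = j + (m + 1) := fun m => by omega
  have hadd2 : ∀ m : ℕ, j + 2 + m = j + (m + 2) := fun m => by omega
  set A := tridiag p q r j (n + 2) with hA
  have hsub0 : A.submatrix Fin.succ (Fin.succAbove 0) = tridiag p q r (j+1) (n+1) := by
    ext a b
    simp only [hA, Matrix.submatrix_apply, Fin.succAbove_zero, tridiag, Matrix.of_apply,
      Fin.val_succ, hadd1, add_left_inj]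
  set B := A.submatrix Fin.succ (Fin.succAbove 1) with hB
  have hB00 : B 0 0 = r j := by
    simp [hB, hA, tridiag, Fin.succAbove]
  have hBz : ∀ i : Fin n, B i.succ 0 = 0 := by
    intro i
    simp [hB, hA, tridiag, Fin.succAbove]
  have hone : (1 : Fin (n+2)) = Fin.succ 0 := rfl
  have hsubB : B.submatrix Fin.succ Fin.succ = tridiag p q r (j+2) n := by
    ext a b
    simp only [hB, hA, Matrix.submatrix_apply, Fin.succAbove_zero, hone,
      Fin.succ_succAbove_succ, Fin.succAbove_zero, tridiag, Matrix.of_apply,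
      Fin.val_succ, hadd2, add_left_inj]
  have hdetB : B.det = r j * (tridiag p q r (j+2) n).det := by
    rw [Matrix.det_succ_column_zero, Fin.sum_univ_succ]
    simp [hBz, hB00, hsubB]
  have h0 : A 0 0 = -q j := by simp [hA, tridiag]
  have h1 : A 0 (Fin.succ 0) = p (j+1) := by simp [hA, tridiag, Fin.succ]
  have hz : ∀ i : Fin n, A 0 i.succ.succ = 0 := by
    intro i; simp [hA, tridiag]
  rw [Matrix.det_succ_row_zero, Fin.sum_univ_succ, Fin.sum_univ_succ]
  simp only [hz, mul_zero, zero_mul, Finset.sum_const_zero, add_zero, h0, h1, hsub0]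
  rw [← hone, show ((1 : Fin (n+2)) : ℕ) = 1 from rfl, hdetB]
  simp
  ring

lemma prod_shift (g : ℕ → ℂ) (j n : ℕ) :
    ∏ i ∈ Finset.range (n + 1), g (j + i)
      = g j * ∏ i ∈ Finset.range n, g (j + 1 + i) := by
  rw [Finset.prod_range_succ' (fun i => g (j + i)) n]
  rw [mul_comm, add_zero]
  congr 1
  exact Finset.prod_congr rfl fun i _ => congrArg g (by omega)

lemma aux_main (d : ℕ) (x y : ℝ) :
    ∀ n j : ℕ,
      (∏ i ∈ Finset.range (n + 1), ((x + y * Complex.I) - ((j + i : ℕ) : ℂ))) *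
          (∏ i ∈ Finset.range (n + 1), ((x - y * Complex.I) + d - ((j + i : ℕ) : ℂ)))
        - (∏ i ∈ Finset.range (n + 1), ((x - y * Complex.I) - ((j + i : ℕ) : ℂ))) *
          (∏ i ∈ Finset.range (n + 1), ((x + y * Complex.I) + d - ((j + i : ℕ) : ℂ)))
      = (d : ℂ) * (((x + y * Complex.I) : ℂ) - (x - y * Complex.I)) * (-1) ^ n *
          ((tridiag (fun m => (x - m) ^ 2 + y ^ 2)
            (fun m => ((x - m) ^ 2 + y ^ 2) + ((x - m - 1 + d) ^ 2 + y ^ 2)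
              - (d : ℝ) * ((d : ℝ) - 1))
            (fun m => (x - m - 1 + d) ^ 2 + y ^ 2) j n).det : ℝ) := by
  set z : ℂ := x + y * Complex.I with hz
  set w : ℂ := x - y * Complex.I with hw
  set P : ℕ → ℝ := fun m => (x - m) ^ 2 + y ^ 2 with hP
  set Q : ℕ → ℝ := fun m => ((x - m) ^ 2 + y ^ 2) + ((x - m - 1 + d) ^ 2 + y ^ 2)
      - (d : ℝ) * ((d : ℝ) - 1) with hQ
  set R : ℕ → ℝ := fun m => (x - m - 1 + d) ^ 2 + y ^ 2 with hR
  have hPc : ∀ m : ℕ, ((P m : ℝ) : ℂ) = (z - m) * (w - m) := by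
    intro m
    simp only [hP, hz, hw]
    push_cast
    linear_combination ((y:ℂ)^2) * Complex.I_sq
  have hRc : ∀ m : ℕ, ((R m : ℝ) : ℂ) = (z + d - m - 1) * (w + d - m - 1) := by
    intro m
    simp only [hR, hz, hw]
    push_cast
    linear_combination ((y:ℂ)^2) * Complex.I_sq
  have hQc : ∀ m : ℕ, ((Q m : ℝ) : ℂ)
      = (z - m) * (w - m) + (z + d - m - 1) * (w + d - m - 1) - d * (d - 1) := by
    intro m
    have : ((Q m : ℝ) : ℂ) = ((P m : ℝ) : ℂ) + ((R m : ℝ) : ℂ) - d * (d - 1) := by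
      simp only [hQ, hP, hR]; push_cast; ring
    rw [this, hPc, hRc]
  intro n
  induction n using Nat.strong_induction_on with
  | _ n ih =>
    match n with
    | 0 =>
      intro j
      simp only [Matrix.det_fin_zero, zero_add, Finset.prod_range_one, add_zero]
      push_cast
      ring
    | 1 =>
      intro j
      have hdet : (tridiag P Q R j 1).det = -Q (j + 0) := by
        rw [Matrix.det_fin_one]; simp [tridiag]
      rw [hdet]
      have h2 : ∀ g : ℕ → ℂ, ∏ i ∈ Finset.range (1 + 1), g (j + i) = g j * g (j + 1) := by
        intro g
        rw [Finset.prod_range_succ, Finset.prod_range_one, add_zero]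
      rw [h2 (fun k => z - k), h2 (fun k => w + d - k), h2 (fun k => w - k),
        h2 (fun k => z + d - k)]
      push_cast [hQc]
      ring
    | (m + 2) =>
      intro j
      have ih1 := ih (m + 1) (by omega) (j + 1)
      have ih0 := ih m (by omega) (j + 1 + 1)
      rw [tridiag_det_rec]
      rw [show j + 2 = j + 1 + 1 from rfl]
      rw [prod_shift (fun k => z - k), prod_shift (fun k => w + d - k),
        prod_shift (fun k => w - k), prod_shift (fun k => z + d - k)]
      rw [prod_shift (fun k => z - k) (j+1), prod_shift (fun k => w + d - k) (j+1),
        prod_shift (fun k => w - k) (j+1), prod_shift (fun k => z + d - k) (j+1)]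
      rw [prod_shift (fun k => z - k) (j+1), prod_shift (fun k => w + d - k) (j+1),
        prod_shift (fun k => w - k) (j+1), prod_shift (fun k => z + d - k) (j+1)] at ih1
      push_cast [hQc, hPc, hRc] at ih1 ih0 ⊢
      linear_combination
        ((z - j) * (w + (d:ℂ) - j) + (w - ((j:ℂ)+1)) * (z + d - ((j:ℂ)+1))) * ih1
        - (z - ((j:ℂ)+1)) * (w - ((j:ℂ)+1)) * (z + d - ((j:ℂ)+1)) * (w + d - ((j:ℂ)+1)) * ih0

/-- Proposition 2.4 for the binomial coefficient basis: with
`p_m = (x-m)² + y²`, `r_m = (x-m-1+d)² + y²`, `q_m = p_m + r_m - d(d-1)`,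
`d (z - z̄) (-1)^{k-j-1} D_{j,k} = ∏(z-m)∏(z̄+d-m) - ∏(z̄-m)∏(z+d-m)`. -/
theorem stmt_5 (d j k : ℕ) (hd : 1 ≤ d) (hjk : j < k) (hkd : k ≤ d) (x y : ℝ) :
    (d : ℂ) * ((x + y * Complex.I) - conj (x + y * Complex.I)) * (-1) ^ (k - j - 1) *
        ((Dtri (fun m => (x - m) ^ 2 + y ^ 2)
            (fun m => ((x - m) ^ 2 + y ^ 2) + ((x - m - 1 + d) ^ 2 + y ^ 2)
              - (d : ℝ) * ((d : ℝ) - 1))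
            (fun m => (x - m - 1 + d) ^ 2 + y ^ 2) j k : ℝ) : ℂ)
      = (∏ m ∈ Finset.Icc j (k - 1), ((x + y * Complex.I) - m)) *
          (∏ m ∈ Finset.Icc j (k - 1), (conj (x + y * Complex.I) + d - m))
        - (∏ m ∈ Finset.Icc j (k - 1), (conj (x + y * Complex.I) - m)) *
          (∏ m ∈ Finset.Icc j (k - 1), ((x + y * Complex.I) + d - m)) := by
  have hk : k - 1 = j + (k - j - 1) := by omega
  have hn : k - j = (k - j - 1) + 1 := by omega
  have hicc : ∀ g : ℕ → ℂ, ∏ m ∈ Finset.Icc j (k - 1), g m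
      = ∏ i ∈ Finset.range ((k - j - 1) + 1), g (j + i) := by
    intro g
    rw [show Finset.Icc j (k-1) = Finset.Ico j k by rw [← Finset.Ico_add_one_right_eq_Icc]; congr 1; omega]
    rw [Finset.prod_Ico_eq_prod_range]
    conv_lhs => rw [hn]
  have hconj : conj ((x:ℂ) + y * Complex.I) = (x:ℂ) - y * Complex.I := by
    simp [Complex.ext_iff]
  rw [hconj, hicc, hicc, hicc, hicc]
  unfold Dtri
  exact (aux_main d x y (k - j - 1) j).symm
end

section
/- Let R be a commutative ring, d ≥ 1 an integer, and b_0, …, b_d elements of R. Let M be the (d+1)×d matrix (rows indexed 0,…,d, columns indexed 0,…,d−1) whose column c has entry −b_{c+1} in row c, entry b_c in row c+1, and zeros elsewhere. For each j with 0 ≤ j ≤ d, let M_j be the d×d matrix obtained from M by deleting row j. Then det M_j = (−1)^j · b_j · ∏_{i=1}^{d−1} b_i. -/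
/-!
Deleting row `j` makes the matrix block diagonal: the rows above `j` form a lower-triangular
block with diagonal `-b₁, …, -b_j`, and the rows below it an upper-triangular block with diagonal
`b_j, …, b_{d-1}`.
-/

open Matrix Finset

theorem Fin.val_succAbove_eq_ite {n : ℕ} (j : Fin (n + 1)) (a : Fin n) :
    (j.succAbove a : ℕ) = if (a : ℕ) < j then (a : ℕ) else (a : ℕ) + 1 := by
  unfold Fin.succAbove
  split_ifs <;> simp_all [Fin.lt_def]

theorem Finset.prod_range_succ_mul_prod_Ico {M : Type*} [CommMonoid M] (f : ℕ → M) {k n : ℕ}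
    (hk : k ≤ n) (hn : 1 ≤ n) :
    (∏ i ∈ range k, f (i + 1)) * ∏ i ∈ Ico k n, f i = f k * ∏ i ∈ Ico 1 n, f i := by
  cases k with
  | zero => rw [prod_range_zero, one_mul, prod_eq_prod_Ico_succ_bot hn]
  | succ k =>
    have hshift : ∏ i ∈ range k, f (i + 1) = ∏ i ∈ Ico 1 (k + 1), f i := by
      simp [prod_Ico_eq_prod_range, add_comm]
    rw [prod_range_succ, hshift, ← prod_Ico_consecutive f (by omega : 1 ≤ k + 1) hk]
    ac_rfl

section Bidiagonal

variable {R : Type*} [CommRing R] (b : ℕ → R)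

/-- The entry in row `r`, column `c` of the paper's `(d + 1) × d` matrix `M`. -/
def bidiagEntry (r c : ℕ) : R :=
  if r = c then -b (c + 1) else if r = c + 1 then b c else 0

theorem det_bidiagEntry_lower (k : ℕ) :
    (of fun a c : Fin k => bidiagEntry b a c).det = (-1) ^ k * ∏ i ∈ range k, b (i + 1) := by
  have hlower : (of fun a c : Fin k => bidiagEntry b a c).IsLowerTriangular := by
    intro a c (h : a < c)
    have : (a : ℕ) < c := h
    simp [bidiagEntry, show (a : ℕ) ≠ c by omega, show (a : ℕ) ≠ c + 1 by omega]
  rw [det_of_isLowerTriangular _ hlower]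
  simp [bidiagEntry, Fin.prod_univ_eq_prod_range (fun i => -b (i + 1)), prod_neg]

theorem det_bidiagEntry_upper (k m : ℕ) :
    (of fun a c : Fin m => bidiagEntry b (k + a + 1) (k + c)).det = ∏ i ∈ Ico k (k + m), b i := by
  have hupper : (of fun a c : Fin m => bidiagEntry b (k + a + 1) (k + c)).IsUpperTriangular := by
    intro a c (h : c < a)
    have : (c : ℕ) < a := h
    simp [bidiagEntry, show k + a + 1 ≠ k + c by omega, show (a : ℕ) ≠ c by omega]
  rw [det_of_isUpperTriangular hupper, prod_Ico_eq_prod_range, Nat.add_sub_cancel_left]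
  simp [bidiagEntry, Fin.prod_univ_eq_prod_range (fun i => b (k + i))]

theorem det_bidiagEntry_skipRow {k n : ℕ} (hk : k ≤ n) :
    (of fun a c : Fin n => bidiagEntry b (if (a : ℕ) < k then a else a + 1) c).det
      = (-1) ^ k * (∏ i ∈ range k, b (i + 1)) * ∏ i ∈ Ico k n, b i := by
  obtain ⟨m, rfl⟩ := Nat.exists_eq_add_of_le hk
  have hblocks : (of fun a c : Fin (k + m) =>
      bidiagEntry b (if (a : ℕ) < k then a else a + 1) c).submatrix finSumFinEquiv finSumFinEquiv
      = fromBlocks (of fun a c : Fin k => bidiagEntry b a c) 0 0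
          (of fun a c : Fin m => bidiagEntry b (k + a + 1) (k + c)) := by
    ext (a | a) (c | c)
    · simp [bidiagEntry]
    · simp [bidiagEntry, show (a : ℕ) ≠ k + c by omega, show (a : ℕ) ≠ k + c + 1 by omega]
    · simp [bidiagEntry, show k + a + 1 ≠ c by omega, show k + (a : ℕ) ≠ c by omega]
    · simp [bidiagEntry]
  rw [← det_submatrix_equiv_self finSumFinEquiv, hblocks, det_fromBlocks_zero₁₂,
    det_bidiagEntry_lower, det_bidiagEntry_upper]

end Bidiagonal

/-- Proposition 2.5: deleting row `j` from the `(d+1) × d` bidiagonal matrix whose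
column `c` has `-b (c+1)` in row `c` and `b c` in row `c+1` yields a square matrix
with determinant `(-1)^j · b_j · b_1 b_2 ⋯ b_{d-1}`. -/
theorem stmt_6 (R : Type*) [CommRing R] (d : ℕ) (hd : 1 ≤ d) (b : ℕ → R)
    (j : Fin (d + 1)) :
    (Matrix.of fun a c : Fin d =>
        if ((j.succAbove a : Fin (d + 1)) : ℕ) = (c : ℕ) then -b ((c : ℕ) + 1)
        else if ((j.succAbove a : Fin (d + 1)) : ℕ) = (c : ℕ) + 1 then b (c : ℕ)
        else 0).det
      = (-1) ^ (j : ℕ) * b (j : ℕ) * ∏ i ∈ Finset.Icc 1 (d - 1), b i := by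
  have hj : (j : ℕ) ≤ d := Nat.lt_succ_iff.mp j.isLt
  show (of fun a c : Fin d => bidiagEntry b (j.succAbove a) c).det = _
  simp only [Fin.val_succAbove_eq_ite]
  rw [det_bidiagEntry_skipRow b hj, mul_assoc, mul_assoc, prod_range_succ_mul_prod_Ico b hj hd,
    Icc_sub_one_right_eq_Ico_of_not_isMin (not_isMin_of_lt hd)]
end

section
/- Let d ≥ 1 be an integer and a_0, …, a_d real numbers with a_i ≥ 0 for all i and not all a_i equal to zero. If z is a nonzero complex number with |arg z| < π/d (principal argument), then Σ_{i=0}^d a_i · z^i ≠ 0. -/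
/-!
Write `θ = arg z` and rotate the sum by `exp (-i d θ / 2)`. The `i`-th term becomes
`a i |z|^i exp (i (i - d/2) θ)`, and since `|i - d/2| ≤ d/2` and `|θ| < π/d`, its angle lies in
`(-π/2, π/2)`. So every rotated term has nonnegative real part, some term has positive real part,
and the rotated sum lies in the open right half-plane.
-/

open Complex

theorem Complex.exp_neg_mul_I_mul_pow (z : ℂ) (n : ℕ) (φ : ℝ) :
    exp (-φ * I) * z ^ n = ((‖z‖ ^ n : ℝ) : ℂ) * exp ((n * arg z - φ : ℝ) * I) := by
  conv_lhs => rw [← norm_mul_exp_arg_mul_I z]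
  rw [mul_pow, ← exp_nat_mul, mul_left_comm, ← exp_add]
  push_cast
  ring_nf

theorem Complex.re_exp_neg_mul_I_mul_ofReal_mul_pow (c : ℝ) (z : ℂ) (n : ℕ) (φ : ℝ) :
    (exp (-φ * I) * (c * z ^ n)).re = c * ‖z‖ ^ n * Real.cos (n * arg z - φ) := by
  rw [mul_left_comm, exp_neg_mul_I_mul_pow, ← mul_assoc, ← ofReal_mul, re_ofReal_mul,
    exp_ofReal_mul_I_re, mul_assoc]

theorem Complex.sum_ofReal_mul_pow_ne_zero {ι : Type*} (s : Finset ι) (a : ι → ℝ) (e : ι → ℕ)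
    (ha : ∀ i ∈ s, 0 ≤ a i) (hne : ∃ i ∈ s, a i ≠ 0) {z : ℂ} (hz : z ≠ 0) (φ : ℝ)
    (hcos : ∀ i ∈ s, 0 < Real.cos (e i * arg z - φ)) :
    ∑ i ∈ s, (a i : ℂ) * z ^ e i ≠ 0 := by
  have hr : 0 < ‖z‖ := norm_pos_iff.mpr hz
  have hpos : 0 < (exp (-φ * I) * ∑ i ∈ s, (a i : ℂ) * z ^ e i).re := by
    simp only [Finset.mul_sum, re_sum, re_exp_neg_mul_I_mul_ofReal_mul_pow]
    obtain ⟨j, hjs, hj⟩ := hne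
    refine Finset.sum_pos' (fun i hi => ?_) ⟨j, hjs, ?_⟩
    · have := ha i hi
      have := hcos i hi
      positivity
    · have := (ha j hjs).lt_of_ne' hj
      have := hcos j hjs
      positivity
  intro h
  simp [h] at hpos

open Real in
theorem Real.cos_sub_half_mul_pos {d t θ : ℝ} (ht₀ : 0 ≤ t) (htd : t ≤ d)
    (hθ : |θ| < π / d) : 0 < cos (t * θ - d * θ / 2) := by
  -- `π / 0 = 0`, so `hθ` excludes `d ≤ 0`.
  have hd : 0 < d := (div_pos_iff_of_pos_left pi_pos).mp ((abs_nonneg θ).trans_lt hθ)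
  have ht : |t - d / 2| ≤ d / 2 := abs_le.mpr ⟨by linarith, by linarith⟩
  have hangle : |t * θ - d * θ / 2| < π / 2 :=
    calc |t * θ - d * θ / 2| = |t - d / 2| * |θ| := by rw [← abs_mul]; ring_nf
      _ ≤ d / 2 * |θ| := by gcongr
      _ < d / 2 * (π / d) := by gcongr
      _ = π / 2 := by field_simp
  exact cos_pos_of_mem_Ioo ⟨by linarith [neg_abs_le (t * θ - d * θ / 2)],
    by linarith [le_abs_self (t * θ - d * θ / 2)]⟩

theorem stmt_8_general (d : ℕ) (a : Fin (d + 1) → ℝ)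
    (ha : ∀ i, 0 ≤ a i) (hne : ∃ i, a i ≠ 0)
    (z : ℂ) (hz : z ≠ 0) (harg : |Complex.arg z| < Real.pi / d) :
    ∑ i, (a i : ℂ) * z ^ (i : ℕ) ≠ 0 := by
  obtain ⟨j, hj⟩ := hne
  refine Complex.sum_ofReal_mul_pow_ne_zero _ a (↑) (fun i _ => ha i) ⟨j, Finset.mem_univ j, hj⟩
    hz (d * Complex.arg z / 2) fun i _ => Real.cos_sub_half_mul_pos (Nat.cast_nonneg _) ?_ harg
  exact_mod_cast Nat.lt_succ_iff.mp i.isLt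

/-- A nonzero polynomial of degree at most `d` with nonnegative coefficients in the
power basis has no zeros in the open sector `|arg z| < π/d`. -/
theorem stmt_8 (d : ℕ) (hd : 1 ≤ d) (a : Fin (d + 1) → ℝ)
    (ha : ∀ i, 0 ≤ a i) (hne : ∃ i, a i ≠ 0)
    (z : ℂ) (hz : z ≠ 0) (harg : |Complex.arg z| < Real.pi / d) :
    ∑ i, (a i : ℂ) * z ^ (i : ℕ) ≠ 0 :=
  stmt_8_general d a ha hne z hz harg
end

section
/- Let d ≥ 2 be an integer and z₀ a complex number with Im z₀ ≠ 0. For 0 ≤ j < k ≤ d, define the real number D_{j,k}(z₀) as the real part of (−1)^{k−j−1} · (∏_{m=j}^{k−1}(z₀−m) · ∏_{m=j}^{k−1}(z̄₀+d−m) − ∏_{m=j}^{k−1}(z̄₀−m) · ∏_{m=j}^{k−1}(z₀+d−m)) / (d · (z₀ − z̄₀)), where z̄₀ is the complex conjugate of z₀. Suppose that for every triple of integers 0 ≤ i < j < k ≤ d, among the three real numbers (−1)^i · D_{j,k}(z₀), (−1)^{j+1} · D_{i,k}(z₀), (−1)^k · D_{i,j}(z₀), at least one is strictly positive and at least one is strictly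 negative. Then for every family of real numbers a_0, …, a_d with a_m ≥ 0 for all m and not all zero, Σ_{m=0}^d a_m · C_d(z₀+d−m) ≠ 0. -/
/-!
Write `c m = C_d(z₀ + d - m)` and view `ℂ` as `ℝ²`. The polynomials `c j` and `c k` share all
but `k - j` of their linear factors, so up to a positive factor and a sign depending only on
`j + k` and `Im z₀`, `D_{j,k}(z₀)` is the determinant `Im (conj (c j) * c k)`.
If `∑ a m • c m = 0` with `a ≥ 0` not identically zero, Carathéodory's theorem in the plane
yields such a relation `u • c i + v • c j + w • c k = 0` with `i < j < k`. The three minors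
`det (c j, c k)`, `det (c k, c i)`, `det (c i, c j)` of a relation are proportional to its weights
`(u, v, w) ≥ 0`, so the three signed quantities of the hypothesis have one common weak sign.
-/

open ComplexConjugate

/-- The real number `D_{j,k}(z)` of Proposition 2.4 for the binomial coefficient
basis, given by its explicit formula. -/
noncomputable def Dval (d j k : ℕ) (z : ℂ) : ℝ :=
  ((-1) ^ (k - j - 1) *
      ((∏ m ∈ Finset.Icc j (k - 1), (z - m)) *
          (∏ m ∈ Finset.Icc j (k - 1), (conj z + d - m))
        - (∏ m ∈ Finset.Icc j (k - 1), (conj z - m)) *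
          (∏ m ∈ Finset.Icc j (k - 1), (z + d - m)))
      / (d * (z - conj z))).re

open Finset Module
open scoped Nat

section Caratheodory

variable {𝕜 E ι : Type*} [Field 𝕜] [LinearOrder 𝕜] [IsStrictOrderedRing 𝕜]
  [AddCommGroup E] [Module 𝕜 E] [FiniteDimensional 𝕜 E] [Fintype ι]

theorem exists_nonneg_card_support_le_of_sum_smul_eq_zero {n : ℕ} (hE : finrank 𝕜 E ≤ n)
    (f : ι → E) (a : ι → 𝕜) (ha : ∀ m, 0 ≤ a m) (hne : ∃ m, a m ≠ 0)
    (hrel : ∑ m, a m • f m = 0) :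
    ∃ b : ι → 𝕜, (∀ m, 0 ≤ b m) ∧ #{m | b m ≠ 0} ≤ n + 1 ∧
      ∑ m, b m = 1 ∧ ∑ m, b m • f m = 0 := by
  classical
  have hpos : 0 < ∑ m, a m := by
    obtain ⟨m, hm⟩ := hne
    exact ((ha m).lt_of_ne' hm).trans_le (single_le_sum (fun i _ => ha i) (mem_univ m))
  have hzero : (0 : E) ∈ convexHull 𝕜 (Set.range f) := by
    have := univ.centerMass_mem_convexHull (fun m _ => ha m) hpos
      (fun m _ => Set.mem_range_self (f := f) m)
    rwa [centerMass, hrel, smul_zero] at this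
  obtain ⟨κ, _, z, w, hzf, hz, hw, hw1, hwz⟩ := eq_pos_convex_span_of_mem_convexHull hzero
  choose g hg using fun i => hzf (Set.mem_range_self i)
  have hg_inj : g.Injective := fun i i' h => hz.injective (by rw [← hg, ← hg, h])
  set b := Function.extend g w 0
  have hb_g (i : κ) : b (g i) = w i := hg_inj.extend_apply _ _ _
  have hb_out (m : ι) (hm : m ∉ Set.range g) : b m = 0 := Function.extend_apply' _ _ _ hm
  refine ⟨b, fun m => ?_, ?_, ?_, ?_⟩
  · by_cases hm : m ∈ Set.range g
    · obtain ⟨i, rfl⟩ := hm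
      exact (hb_g i).symm ▸ (hw i).le
    · exact (hb_out m hm).ge
  · calc #{m | b m ≠ 0} ≤ #(univ.map ⟨g, hg_inj⟩) :=
          card_le_card fun m hm => by
            by_contra hgm
            simp_all
      _ = Fintype.card κ := by simp
      _ ≤ finrank 𝕜 (vectorSpan 𝕜 (Set.range z)) + 1 := hz.card_le_finrank_succ
      _ ≤ n + 1 := by gcongr; exact (Submodule.finrank_le _).trans hE
  · rw [← hw1]
    exact (Fintype.sum_of_injective g hg_inj _ _ (fun m hm => hb_out m hm)
      (fun i => (hb_g i).symm)).symm
  · rw [← hwz]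
    exact (Fintype.sum_of_injective g hg_inj _ _ (fun m hm => by simp [hb_out m hm])
      (fun i => by rw [hb_g, hg])).symm

theorem exists_orderEmbedding_nonneg_sum_smul_eq_zero [LinearOrder ι] {n : ℕ}
    (hE : finrank 𝕜 E ≤ n) (hι : n + 1 ≤ Fintype.card ι)
    (f : ι → E) (a : ι → 𝕜) (ha : ∀ m, 0 ≤ a m) (hne : ∃ m, a m ≠ 0)
    (hrel : ∑ m, a m • f m = 0) :
    ∃ (e : Fin (n + 1) ↪o ι) (u : Fin (n + 1) → 𝕜),
      (∀ x, 0 ≤ u x) ∧ ∑ x, u x = 1 ∧ ∑ x, u x • f (e x) = 0 := by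
  classical
  obtain ⟨b, hb, hcard, hb1, hbf⟩ :=
    exists_nonneg_card_support_le_of_sum_smul_eq_zero hE f a ha hne hrel
  obtain ⟨T, hsupp, -, hT⟩ :=
    exists_subsuperset_card_eq (subset_univ _) hcard (by simpa using hι)
  set e := T.orderEmbOfFin hT
  have hb_out (m : ι) (hm : m ∉ Set.range e) : b m = 0 := by
    rw [range_orderEmbOfFin] at hm
    by_contra h
    exact hm (hsupp (by simpa using h))
  refine ⟨e, fun x => b (e x), fun x => hb _, ?_, ?_⟩
  · rw [← hb1]
    exact Fintype.sum_of_injective e e.injective _ _ hb_out fun _ => rfl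
  · rw [← hbf]
    exact Fintype.sum_of_injective e e.injective _ _ (fun m hm => by simp [hb_out m hm])
      fun _ => rfl

end Caratheodory

/-- The determinant of `p` and `q` as vectors of `ℝ²`. -/
def cross (p q : ℂ) : ℝ := (conj p * q).im

lemma cross_swap (p q : ℂ) : cross q p = -cross p q := by
  simp only [cross, Complex.mul_im, Complex.conj_re, Complex.conj_im]; ring

lemma exists_cross_eq_mul_of_relation {p q r : ℂ} {u v w : ℝ}
    (hne : u ≠ 0 ∨ v ≠ 0 ∨ w ≠ 0) (hrel : u • p + v • q + w • r = 0) :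
    ∃ c : ℝ, cross q r = c * u ∧ cross r p = c * v ∧ cross p q = c * w := by
  have hre := congrArg Complex.re hrel
  have him := congrArg Complex.im hrel
  simp only [Complex.add_re, Complex.add_im, Complex.real_smul, Complex.re_ofReal_mul,
    Complex.im_ofReal_mul, Complex.zero_re, Complex.zero_im] at hre him
  have huv : u * cross r p = v * cross q r := by
    simp only [cross, Complex.mul_im, Complex.conj_re, Complex.conj_im]
    linear_combination r.re * him - r.im * hre
  have hvw : v * cross p q = w * cross r p := by
    simp only [cross, Complex.mul_im, Complex.conj_re, Complex.conj_im]
    linear_combination p.re * him - p.im * hre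
  have hwu : w * cross q r = u * cross p q := by
    simp only [cross, Complex.mul_im, Complex.conj_re, Complex.conj_im]
    linear_combination q.re * him - q.im * hre
  rcases hne with hu | hv | hw
  · exact ⟨cross q r / u, by field_simp, by field_simp; linarith, by field_simp; linarith⟩
  · exact ⟨cross r p / v, by field_simp; linarith, by field_simp, by field_simp; linarith⟩
  · exact ⟨cross p q / w, by field_simp; linarith, by field_simp; linarith, by field_simp⟩

lemma factorial_mul_binomC_add_sub (d j : ℕ) (z : ℂ) :
    d ! * binomC d (z + d - j) = ∏ m ∈ Ico j (j + d), (z + d - m) := by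
  rw [binomC, mul_div_cancel₀ _ (by exact_mod_cast d.factorial_ne_zero),
    prod_Ico_eq_prod_range, Nat.add_sub_cancel_left]
  refine prod_congr rfl fun i _ => ?_
  push_cast
  ring

lemma cross_binomC_mul_factorial_sq {d j k : ℕ} (hjk : j ≤ k) (hkd : k ≤ j + d) (z : ℂ) :
    cross (binomC d (z + d - j)) (binomC d (z + d - k)) * (d ! : ℝ) ^ 2 =
      cross (∏ m ∈ Ico j k, (z + d - m)) (∏ m ∈ Ico j k, (z - m)) *
        Complex.normSq (∏ m ∈ Ico k (j + d), (z + d - m)) := by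
  set A := ∏ m ∈ Ico j k, (z + d - m)
  set B := ∏ m ∈ Ico j k, (z - m)
  set O := ∏ m ∈ Ico k (j + d), (z + d - m)
  have hj : d ! * binomC d (z + d - j) = A * O := by
    rw [factorial_mul_binomC_add_sub, prod_Ico_consecutive _ hjk hkd]
  have hk : d ! * binomC d (z + d - k) = O * B := by
    rw [factorial_mul_binomC_add_sub, ← prod_Ico_consecutive _ hkd (by omega : j + d ≤ k + d),
      ← prod_Ico_add']
    congr 1
    refine prod_congr rfl fun m _ => ?_
    push_cast
    ring
  calc cross (binomC d (z + d - j)) (binomC d (z + d - k)) * (d ! : ℝ) ^ 2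
      = (conj (d ! * binomC d (z + d - j)) * (d ! * binomC d (z + d - k))).im := by
        rw [cross, mul_comm, ← Complex.im_ofReal_mul, map_mul, map_natCast]
        push_cast
        ring_nf
    _ = (conj A * B * (Complex.normSq O : ℂ)).im := by
        rw [hj, hk, Complex.normSq_eq_conj_mul_self, map_mul]; ring_nf
    _ = cross A B * Complex.normSq O := Complex.im_mul_ofReal _ _

lemma neg_one_pow_sub_sub_one {j k : ℕ} (hjk : j < k) :
    (-1 : ℝ) ^ (k - j - 1) = (-1) ^ (j + k + 1) := by
  rw [show j + k + 1 = (k - j - 1) + 2 * (j + 1) by omega, pow_add, pow_mul]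
  norm_num

lemma Dval_eq_cross {d j k : ℕ} (hjk : j < k) (z : ℂ) :
    Dval d j k z = (-1) ^ (j + k + 1) *
      cross (∏ m ∈ Ico j k, (z + d - m)) (∏ m ∈ Ico j k, (z - m)) / (d * z.im) := by
  have hIcc : Icc j (k - 1) = Ico j k := by
    rw [← Ico_add_one_right_eq_Icc, Nat.sub_add_cancel (by omega)]
  set A := ∏ m ∈ Ico j k, (z + d - m)
  set B := ∏ m ∈ Ico j k, (z - m)
  have hconjA : ∏ m ∈ Ico j k, (conj z + d - m) = conj A := by simp [A, map_prod]
  have hconjB : ∏ m ∈ Ico j k, (conj z - m) = conj B := by simp [B, map_prod]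
  have hnum : B * conj A - conj B * A = conj A * B - conj (conj A * B) := by
    simp only [map_mul, Complex.conj_conj]; ring
  rw [Dval, hIcc, hconjA, hconjB, hnum, Complex.sub_conj, Complex.sub_conj, cross,
    ← neg_one_pow_sub_sub_one hjk]
  set x := (conj A * B).im
  have hreal : (-1 : ℂ) ^ (k - j - 1) * (((2 * x : ℝ) : ℂ) * Complex.I) /
      (d * (((2 * z.im : ℝ) : ℂ) * Complex.I)) =
        (((-1) ^ (k - j - 1) * x / (d * z.im) : ℝ) : ℂ) := by
    rw [← mul_assoc, ← mul_assoc, mul_div_mul_right _ _ Complex.I_ne_zero]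
    push_cast
    ring
  rw [hreal, Complex.ofReal_re]

lemma exists_pos_Dval_eq {d j k : ℕ} (hd : 0 < d) (hjk : j < k) (hkd : k ≤ d) {z : ℂ}
    (hz : z.im ≠ 0) : ∃ q : ℝ, 0 < q ∧ Dval d j k z =
      q * ((-1) ^ (j + k + 1) * cross (binomC d (z + d - j)) (binomC d (z + d - k)) / z.im) := by
  set O := ∏ m ∈ Ico k (j + d), (z + d - m)
  have hO : 0 < Complex.normSq O := by
    refine Complex.normSq_pos.mpr (prod_ne_zero_iff.mpr fun m _ hm => hz ?_)
    simpa using congrArg Complex.im hm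
  have hq : 0 < (d ! : ℝ) ^ 2 / (Complex.normSq O * d) :=
    div_pos (by positivity) (mul_pos hO (by exact_mod_cast hd))
  refine ⟨_, hq, ?_⟩
  have hcross := cross_binomC_mul_factorial_sq hjk.le (by omega : k ≤ j + d) z
  rw [Dval_eq_cross hjk, eq_div_iff hO.ne' |>.mpr hcross.symm]
  field_simp

lemma signed_Dval_not_mixed {d i j k : ℕ} (hd : 0 < d) (hij : i < j) (hjk : j < k)
    (hkd : k ≤ d) {z : ℂ} (hz : z.im ≠ 0) {u v w : ℝ}
    (hu : 0 ≤ u) (hv : 0 ≤ v) (hw : 0 ≤ w) (hne : u ≠ 0 ∨ v ≠ 0 ∨ w ≠ 0)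
    (hrel : u • binomC d (z + d - i) + v • binomC d (z + d - j) +
      w • binomC d (z + d - k) = 0) :
    ¬((0 < (-1 : ℝ) ^ i * Dval d j k z ∨ 0 < (-1 : ℝ) ^ (j + 1) * Dval d i k z ∨
          0 < (-1 : ℝ) ^ k * Dval d i j z)
        ∧ ((-1 : ℝ) ^ i * Dval d j k z < 0 ∨ (-1 : ℝ) ^ (j + 1) * Dval d i k z < 0 ∨
          (-1 : ℝ) ^ k * Dval d i j z < 0)) := by
  obtain ⟨c, hjk', hki, hij'⟩ := exists_cross_eq_mul_of_relation hne hrel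
  obtain ⟨q₁, hq₁, hD₁⟩ := exists_pos_Dval_eq hd hjk hkd hz
  obtain ⟨q₂, hq₂, hD₂⟩ := exists_pos_Dval_eq hd (hij.trans hjk) hkd hz
  obtain ⟨q₃, hq₃, hD₃⟩ := exists_pos_Dval_eq hd hij (hjk.le.trans hkd) hz
  set s := (-1) ^ (i + j + k + 1) / z.im * c
  have h₁ : (-1 : ℝ) ^ i * Dval d j k z = q₁ * u * s := by rw [hD₁, hjk']; ring
  have h₂ : (-1 : ℝ) ^ (j + 1) * Dval d i k z = q₂ * v * s := by
    rw [hD₂, ← neg_neg (cross _ _), ← cross_swap, hki]; ring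
  have h₃ : (-1 : ℝ) ^ k * Dval d i j z = q₃ * w * s := by rw [hD₃, hij']; ring
  rw [h₁, h₂, h₃]
  rintro ⟨hpos, hneg⟩
  have : 0 < s := by
    rcases hpos with h | h | h <;> exact pos_of_mul_pos_right h (by positivity)
  have : s < 0 := by
    rcases hneg with h | h | h <;> exact neg_of_mul_neg_right h (by positivity)
  linarith

/-- Theorem 3.3 for the binomial coefficient basis: if at every triple `i < j < k`
the three signed dual determinants take both strict signs, then `z₀` is not a root
of any nonzero polynomial with nonnegative coefficients in the binomial basis. -/
theorem stmt_9 (d : ℕ) (hd : 2 ≤ d) (z₀ : ℂ) (hz₀ : z₀.im ≠ 0)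
    (h : ∀ i j k : ℕ, i < j → j < k → k ≤ d →
      ((0 < (-1 : ℝ) ^ i * Dval d j k z₀ ∨ 0 < (-1 : ℝ) ^ (j + 1) * Dval d i k z₀ ∨
          0 < (-1 : ℝ) ^ k * Dval d i j z₀)
        ∧ ((-1 : ℝ) ^ i * Dval d j k z₀ < 0 ∨ (-1 : ℝ) ^ (j + 1) * Dval d i k z₀ < 0 ∨
          (-1 : ℝ) ^ k * Dval d i j z₀ < 0))) :
    ∀ a : Fin (d + 1) → ℝ, (∀ m, 0 ≤ a m) → (∃ m, a m ≠ 0) →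
      ∑ m, (a m : ℂ) * binomC d (z₀ + d - (m : ℕ)) ≠ 0 := by
  intro a ha hne hsum
  obtain ⟨e, u, hu, hu₁, hrel⟩ := exists_orderEmbedding_nonneg_sum_smul_eq_zero (n := 2)
    (by simp) (by simpa using hd) (fun m : Fin (d + 1) => binomC d (z₀ + d - (m : ℕ))) a ha hne
    (by simpa only [Complex.real_smul] using hsum)
  rw [Fin.sum_univ_three] at hu₁ hrel
  have hu_ne : u 0 ≠ 0 ∨ u 1 ≠ 0 ∨ u 2 ≠ 0 := by
    by_contra! h0
    simp [h0] at hu₁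
  have h01 : e 0 < e 1 := e.strictMono (by decide)
  have h12 : e 1 < e 2 := e.strictMono (by decide)
  have h2d : (e 2 : ℕ) ≤ d := Nat.lt_succ_iff.mp (e 2).isLt
  exact signed_Dval_not_mixed (by omega) h01 h12 h2d hz₀ (hu 0) (hu 1) (hu 2) hu_ne hrel
    (h _ _ _ h01 h12 h2d)
end

section
/- Let d ≥ 1 and 0 ≤ j < k ≤ d be integers with n := k−j−1 ≥ 1, and set a_i := i + (d−1−k+j)/2 for i = 1, …, n+1 (these are positive real numbers). Let G be a real polynomial in two variables X, Y such that for all real x, y: y · G(x,y) = Im( ∏_{i=1}^{n+1} ((x+iy) − a_i) · ((x−iy) + a_i) ). Then: (1) at every real point (x,y) with G(x,y) = 0, the gradient (∂G/∂X (x,y), ∂G/∂Y (x,y)) is nonzero; (2) if G(x,y) = 0 and ∂G/∂X (x,y) = 0, then x = 0. -/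
/-!
With `z = x + y i`, each factor is `Fᵢ = (z - aᵢ)(z̄ + aᵢ) = |z|² - aᵢ² + 2 aᵢ y i`.
Off the real axis no `Fᵢ` vanishes, so on the curve `P = ∏ Fᵢ` is real and nonzero, and
differentiating `y G = Im P` gives `y ∂ₓG = Re P · ∑ Im (2x / Fᵢ)` and
`G + y ∂_yG = Re P · ∑ Im ((2y + 2aᵢ i) / Fᵢ)`: the first sum has the sign of `-xy`, the second
is negative at `x = 0`.
On the real axis `G(x, 0) = q(x²)` with `q = ∑ 2aᵢ ∏_{j ≠ i} (t - aⱼ²)`. Away from the `aᵢ²`,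
`q = ∏ (t - aⱼ²) · ∑ 2aᵢ / (t - aᵢ²)` where the sum is strictly decreasing, so `q` has only
simple roots; and `q(0) ≠ 0`, so `∂ₓG(x, 0) = 2x q'(x²) ≠ 0` on the curve.
-/
open Finset

section PartialDerivatives

variable (p : MvPolynomial (Fin 2) ℝ) (x y : ℝ)

theorem hasDerivAt_eval_pderiv_zero :
    HasDerivAt (fun t => MvPolynomial.eval ![t, y] p)
      (MvPolynomial.eval ![x, y] (MvPolynomial.pderiv 0 p)) x := by
  induction p using MvPolynomial.induction_on with
  | C c => simpa using hasDerivAt_const x c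
  | add p q hp hq => simpa using hp.fun_add hq
  | mul_X p i hp =>
    fin_cases i
    · simpa [mul_comm, add_comm] using hp.fun_mul (hasDerivAt_id x)
    · simpa [mul_comm] using hp.mul_const y

theorem hasDerivAt_eval_pderiv_one :
    HasDerivAt (fun t => MvPolynomial.eval ![x, t] p)
      (MvPolynomial.eval ![x, y] (MvPolynomial.pderiv 1 p)) y := by
  induction p using MvPolynomial.induction_on with
  | C c => simpa using hasDerivAt_const y c
  | add p q hp hq => simpa using hp.fun_add hq
  | mul_X p i hp =>
    fin_cases i
    · simpa [mul_comm] using hp.mul_const x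
    · simpa [mul_comm, add_comm] using hp.fun_mul (hasDerivAt_id y)

end PartialDerivatives

theorem HasDerivAt.complex_im {f : ℝ → ℂ} {f' : ℂ} {x : ℝ} (hf : HasDerivAt f f' x) :
    HasDerivAt (fun t => (f t).im) f'.im x := by
  simpa [Function.comp_def] using (Complex.imCLM.hasFDerivAt.comp x hf.hasFDerivAt).hasDerivAt

section ImDerivative

variable {G : MvPolynomial (Fin 2) ℝ} {Φ : ℝ → ℝ → ℂ}
  (hG : ∀ x y, y * MvPolynomial.eval ![x, y] G = (Φ x y).im)
include hG

theorem mul_eval_pderiv_zero_eq_im {x y : ℝ} {Φx : ℂ} (hΦ : HasDerivAt (Φ · y) Φx x) :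
    y * MvPolynomial.eval ![x, y] (MvPolynomial.pderiv 0 G) = Φx.im := by
  refine ((hasDerivAt_eval_pderiv_zero G x y).const_mul y).unique ?_
  simpa only [hG] using hΦ.complex_im

theorem eval_add_mul_eval_pderiv_one_eq_im {x y : ℝ} {Φy : ℂ} (hΦ : HasDerivAt (Φ x ·) Φy y) :
    MvPolynomial.eval ![x, y] G + y * MvPolynomial.eval ![x, y] (MvPolynomial.pderiv 1 G) =
      Φy.im := by
  refine (by simpa using (hasDerivAt_id y).fun_mul (hasDerivAt_eval_pderiv_one G x y) :
    HasDerivAt (fun t => t * MvPolynomial.eval ![x, t] G) _ y).unique ?_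
  simpa only [hG] using hΦ.complex_im

end ImDerivative

/-- `(z - a)(z̄ + a)` for `z = x + y i`, in real and imaginary parts. -/
def centroFactor (a x y : ℝ) : ℂ :=
  ((x ^ 2 + y ^ 2 - a ^ 2 : ℝ) : ℂ) + ((2 * a * y : ℝ) : ℂ) * Complex.I

section CentroFactor

variable (a x y : ℝ)

@[simp] theorem centroFactor_re : (centroFactor a x y).re = x ^ 2 + y ^ 2 - a ^ 2 := by
  simp only [centroFactor, Complex.add_re, Complex.ofReal_re, Complex.re_ofReal_mul, Complex.I_re,
    mul_zero, add_zero]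

@[simp] theorem centroFactor_im : (centroFactor a x y).im = 2 * a * y := by
  simp only [centroFactor, Complex.add_im, Complex.ofReal_im, Complex.im_ofReal_mul, Complex.I_im,
    mul_one, zero_add]

theorem centroFactor_eq :
    ((x : ℂ) + y * Complex.I - a) * ((x : ℂ) - y * Complex.I + a) = centroFactor a x y := by
  apply Complex.ext <;> simp <;> ring

theorem centroFactor_zero_right : centroFactor a x 0 = ((x ^ 2 - a ^ 2 : ℝ) : ℂ) := by
  simp [centroFactor]

theorem centroFactor_ne_zero {a y : ℝ} (ha : a ≠ 0) (hy : y ≠ 0) (x : ℝ) :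
    centroFactor a x y ≠ 0 := fun h => by
  simpa [ha, hy] using congrArg Complex.im h

theorem hasDerivAt_centroFactor_fst :
    HasDerivAt (centroFactor a · y) ((2 * x : ℝ) : ℂ) x := by
  have := (((hasDerivAt_pow 2 x).add_const (y ^ 2)).sub_const (a ^ 2)).ofReal_comp
  simpa [centroFactor] using this.add_const (((2 * a * y : ℝ) : ℂ) * Complex.I)

theorem hasDerivAt_centroFactor_snd :
    HasDerivAt (centroFactor a x ·) (((2 * y : ℝ) : ℂ) + ((2 * a : ℝ) : ℂ) * Complex.I) y := by
  have h₁ := (((hasDerivAt_pow 2 y).const_add (x ^ 2)).sub_const (a ^ 2)).ofReal_comp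
  have h₂ := (((hasDerivAt_id y).const_mul (2 * a)).ofReal_comp).mul_const Complex.I
  simpa [centroFactor] using h₁.fun_add h₂

end CentroFactor

theorem Finset.sum_prod_erase_mul {ι K : Type*} [Field K] [DecidableEq ι] {s : Finset ι}
    {f : ι → K} (hf : ∀ i ∈ s, f i ≠ 0) (c : ι → K) :
    ∑ i ∈ s, (∏ j ∈ s.erase i, f j) * c i = (∏ i ∈ s, f i) * ∑ i ∈ s, c i / f i := by
  rw [mul_sum]
  refine sum_congr rfl fun i hi => ?_
  rw [← mul_prod_erase s f hi]
  field_simp [hf i hi]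

section OffAxis

variable {ι : Type*} [DecidableEq ι] {s : Finset ι} {a : ι → ℝ} {G : MvPolynomial (Fin 2) ℝ}
  (hG : ∀ x y, y * MvPolynomial.eval ![x, y] G = (∏ i ∈ s, centroFactor (a i) x y).im)
  (hpos : ∀ i ∈ s, 0 < a i) (hs : s.Nonempty)
include hG hpos hs

omit hs in
theorem im_sum_prod_erase_mul_centroFactor {x y : ℝ} (hy : y ≠ 0)
    (hxy : MvPolynomial.eval ![x, y] G = 0) (c : ι → ℂ) :
    (∏ i ∈ s, centroFactor (a i) x y).re ≠ 0 ∧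
    (∑ i ∈ s, (∏ j ∈ s.erase i, centroFactor (a j) x y) * c i).im =
      (∏ i ∈ s, centroFactor (a i) x y).re * ∑ i ∈ s, (c i / centroFactor (a i) x y).im := by
  have hF : ∀ i ∈ s, centroFactor (a i) x y ≠ 0 := fun i hi =>
    centroFactor_ne_zero (hpos i hi).ne' hy x
  have him : (∏ i ∈ s, centroFactor (a i) x y).im = 0 := by rw [← hG, hxy, mul_zero]
  refine ⟨fun hre => prod_ne_zero_iff.2 hF (Complex.ext hre him), ?_⟩
  rw [sum_prod_erase_mul hF, Complex.mul_im, him, zero_mul, add_zero, Complex.im_sum]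

theorem eval_pderiv_zero_ne_zero_of_ne_zero {x y : ℝ} (hy : y ≠ 0) (hx : x ≠ 0)
    (hxy : MvPolynomial.eval ![x, y] G = 0) :
    MvPolynomial.eval ![x, y] (MvPolynomial.pderiv 0 G) ≠ 0 := by
  have hderiv := mul_eval_pderiv_zero_eq_im hG
    (HasDerivAt.fun_finsetProd fun i _ => hasDerivAt_centroFactor_fst (a i) x y)
  obtain ⟨hre, him⟩ := im_sum_prod_erase_mul_centroFactor hG hpos hy hxy fun _ => ((2 * x : ℝ) : ℂ)
  have hterm : ∀ i ∈ s, (((2 * x : ℝ) : ℂ) / centroFactor (a i) x y).im =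
      -(4 * x * y) * (a i / Complex.normSq (centroFactor (a i) x y)) := fun i _ => by
    simp only [Complex.div_im, Complex.ofReal_im, Complex.ofReal_re, centroFactor_im]
    ring
  have hsum : 0 < ∑ i ∈ s, a i / Complex.normSq (centroFactor (a i) x y) :=
    sum_pos (fun i hi => div_pos (hpos i hi)
      (Complex.normSq_pos.2 (centroFactor_ne_zero (hpos i hi).ne' hy x))) hs
  intro h
  simp only [smul_eq_mul] at hderiv
  rw [h, mul_zero, him, sum_congr rfl hterm, ← mul_sum] at hderiv
  exact mul_ne_zero hre (mul_ne_zero (by simp [hx, hy]) hsum.ne') hderiv.symm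

theorem eval_pderiv_one_ne_zero_of_eval_zero_eq_zero {y : ℝ} (hy : y ≠ 0)
    (hxy : MvPolynomial.eval ![0, y] G = 0) :
    MvPolynomial.eval ![0, y] (MvPolynomial.pderiv 1 G) ≠ 0 := by
  have hderiv := eval_add_mul_eval_pderiv_one_eq_im hG
    (HasDerivAt.fun_finsetProd fun i _ => hasDerivAt_centroFactor_snd (a i) 0 y)
  obtain ⟨hre, him⟩ := im_sum_prod_erase_mul_centroFactor hG hpos hy hxy
    fun i => ((2 * y : ℝ) : ℂ) + ((2 * a i : ℝ) : ℂ) * Complex.I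
  have hterm : ∀ i ∈ s,
      ((((2 * y : ℝ) : ℂ) + ((2 * a i : ℝ) : ℂ) * Complex.I) / centroFactor (a i) 0 y).im =
        -(2 * a i * (y ^ 2 + a i ^ 2) / Complex.normSq (centroFactor (a i) 0 y)) := fun i _ => by
    simp only [Complex.div_im, Complex.add_im, Complex.add_re, Complex.ofReal_im,
      Complex.ofReal_re, Complex.re_ofReal_mul, Complex.im_ofReal_mul, Complex.I_re, Complex.I_im,
      centroFactor_re, centroFactor_im]
    ring
  have hsum : 0 < ∑ i ∈ s, 2 * a i * (y ^ 2 + a i ^ 2) / Complex.normSq (centroFactor (a i) 0 y) :=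
    sum_pos (fun i hi => div_pos (by have := hpos i hi; positivity)
      (Complex.normSq_pos.2 (centroFactor_ne_zero (hpos i hi).ne' hy 0))) hs
  intro h
  simp only [smul_eq_mul] at hderiv
  rw [hxy, h, mul_zero, add_zero, him, sum_congr rfl hterm, sum_neg_distrib] at hderiv
  exact mul_ne_zero hre (neg_ne_zero.2 hsum.ne') hderiv.symm

end OffAxis

section Axis

variable {ι : Type*} [DecidableEq ι] {s : Finset ι} {a : ι → ℝ}

variable (s a) in
noncomputable def axisPoly : Polynomial ℝ :=
  ∑ i ∈ s, Polynomial.C (2 * a i) * ∏ j ∈ s.erase i, (Polynomial.X - Polynomial.C (a j ^ 2))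

theorem eval_axisPoly (t : ℝ) :
    (axisPoly s a).eval t = ∑ i ∈ s, 2 * a i * ∏ j ∈ s.erase i, (t - a j ^ 2) := by
  simp [axisPoly, Polynomial.eval_finsetSum, Polynomial.eval_prod]

theorem eval_axisPoly_eq_prod_mul_sum {t : ℝ} (ht : ∀ j ∈ s, t ≠ a j ^ 2) :
    (axisPoly s a).eval t = (∏ j ∈ s, (t - a j ^ 2)) * ∑ i ∈ s, 2 * a i / (t - a i ^ 2) := by
  rw [eval_axisPoly, ← sum_prod_erase_mul fun j hj => sub_ne_zero.2 (ht j hj)]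
  simp only [mul_comm]

section Positive

variable (hpos : ∀ i ∈ s, 0 < a i)
include hpos

theorem eval_axisPoly_sq_ne_zero (hinj : Set.InjOn a s) {i : ι} (hi : i ∈ s) :
    (axisPoly s a).eval (a i ^ 2) ≠ 0 := by
  rw [eval_axisPoly, sum_eq_single i]
  · refine mul_ne_zero (by linarith [hpos i hi]) (prod_ne_zero_iff.2 fun j hj => ?_)
    obtain ⟨hji, hj⟩ := mem_erase.1 hj
    rw [sub_ne_zero, Ne, sq_eq_sq₀ (hpos i hi).le (hpos j hj).le]
    exact fun h => hji (hinj hj hi h.symm)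
  · exact fun k _ hki =>
      mul_eq_zero_of_right _ (prod_eq_zero (mem_erase.2 ⟨Ne.symm hki, hi⟩) (sub_self _))
  · exact fun h => absurd hi h

theorem eval_zero_axisPoly_ne_zero (hs : s.Nonempty) : (axisPoly s a).eval 0 ≠ 0 := by
  have hsq : ∀ j ∈ s, 0 < a j ^ 2 := fun j hj => by have := hpos j hj; positivity
  rw [eval_axisPoly_eq_prod_mul_sum fun j hj => (hsq j hj).ne]
  refine mul_ne_zero (prod_ne_zero_iff.2 fun j hj => by linarith [hsq j hj]) (sum_neg ?_ hs).ne
  exact fun i hi => div_neg_of_pos_of_neg (by linarith [hpos i hi]) (by linarith [hsq i hi])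

theorem eval_derivative_axisPoly_ne_zero (hinj : Set.InjOn a s) (hs : s.Nonempty) {t : ℝ}
    (ht : (axisPoly s a).eval t = 0) : (axisPoly s a).derivative.eval t ≠ 0 := by
  have hne : ∀ j ∈ s, t ≠ a j ^ 2 := by
    rintro j hj rfl
    exact eval_axisPoly_sq_ne_zero hpos hinj hj ht
  set p : ℝ → ℝ := fun u => ∏ j ∈ s, (u - a j ^ 2)
  set h : ℝ → ℝ := fun u => ∑ i ∈ s, 2 * a i / (u - a i ^ 2)
  have hp : p t ≠ 0 := prod_ne_zero_iff.2 fun j hj => sub_ne_zero.2 (hne j hj)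
  have hh : h t = 0 := by
    rw [eval_axisPoly_eq_prod_mul_sum hne] at ht
    exact (mul_eq_zero.1 ht).resolve_left hp
  have hh' : HasDerivAt h (∑ i ∈ s, -(2 * a i) / (t - a i ^ 2) ^ 2) t :=
    HasDerivAt.fun_sum fun i hi => by
      simpa using (hasDerivAt_const t (2 * a i)).fun_div ((hasDerivAt_id t).sub_const (a i ^ 2))
        (sub_ne_zero.2 (hne i hi))
  have hp' := (show DifferentiableAt ℝ p t by fun_prop).hasDerivAt
  have hfactor : (axisPoly s a).eval =ᶠ[nhds t] fun u => p u * h u :=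
    ((Filter.eventually_all_finset s).2 fun j hj => eventually_ne_nhds (hne j hj)).mono
      fun u hu => eval_axisPoly_eq_prod_mul_sum hu
  rw [((Polynomial.hasDerivAt _ t).unique ((hp'.mul hh').congr_of_eventuallyEq hfactor)), hh,
    mul_zero, zero_add]
  refine mul_ne_zero hp (sum_neg (fun i hi => div_neg_of_neg_of_pos ?_ ?_) hs).ne
  · linarith [hpos i hi]
  · exact sq_pos_of_ne_zero (sub_ne_zero.2 (hne i hi))

end Positive

variable {G : MvPolynomial (Fin 2) ℝ}
  (hG : ∀ x y, y * MvPolynomial.eval ![x, y] G = (∏ i ∈ s, centroFactor (a i) x y).im)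
include hG

theorem eval_axis_eq (x : ℝ) : MvPolynomial.eval ![x, 0] G = (axisPoly s a).eval (x ^ 2) := by
  have := eval_add_mul_eval_pderiv_one_eq_im hG
    (HasDerivAt.fun_finsetProd fun i _ => hasDerivAt_centroFactor_snd (a i) x 0)
  rw [zero_mul, add_zero] at this
  rw [this, eval_axisPoly, Complex.im_sum]
  refine sum_congr rfl fun i _ => ?_
  simp only [centroFactor_zero_right, ← Complex.ofReal_prod, smul_eq_mul, Complex.mul_im,
    Complex.ofReal_re, Complex.ofReal_im, Complex.add_re, Complex.add_im, Complex.re_ofReal_mul,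
    Complex.I_re, Complex.I_im]
  ring

theorem eval_pderiv_zero_axis_eq (x : ℝ) :
    MvPolynomial.eval ![x, 0] (MvPolynomial.pderiv 0 G) =
      (axisPoly s a).derivative.eval (x ^ 2) * (2 * x) := by
  refine (hasDerivAt_eval_pderiv_zero G x 0).unique ?_
  simp only [eval_axis_eq hG]
  simpa [Function.comp_def] using (Polynomial.hasDerivAt _ _).comp x (hasDerivAt_pow 2 x)

theorem eval_pderiv_zero_axis_ne_zero (hpos : ∀ i ∈ s, 0 < a i) (hinj : Set.InjOn a s)
    (hs : s.Nonempty) {x : ℝ} (hx : MvPolynomial.eval ![x, 0] G = 0) :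
    MvPolynomial.eval ![x, 0] (MvPolynomial.pderiv 0 G) ≠ 0 := by
  rw [eval_axis_eq hG] at hx
  have hx0 : x ≠ 0 := by
    rintro rfl
    exact eval_zero_axisPoly_ne_zero hpos hs (by simpa using hx)
  rw [eval_pderiv_zero_axis_eq hG]
  exact mul_ne_zero (eval_derivative_axisPoly_ne_zero hpos hinj hs hx) (by simpa using hx0)

end Axis

theorem stmt_11_general (d j k : ℕ) (hjk : j < k) (hkd : k ≤ d)
    (G : MvPolynomial (Fin 2) ℝ)
    (hG : ∀ x y : ℝ,
      y * MvPolynomial.eval ![x, y] G =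
        (∏ i ∈ Finset.Icc 1 (k - j),
          ((((x : ℂ) + y * Complex.I) -
              (((i : ℝ) + ((d : ℝ) - 1 - k + j) / 2 : ℝ) : ℂ)) *
            (((x : ℂ) - y * Complex.I) +
              (((i : ℝ) + ((d : ℝ) - 1 - k + j) / 2 : ℝ) : ℂ)))).im) :
    (∀ x y : ℝ, MvPolynomial.eval ![x, y] G = 0 →
        (MvPolynomial.eval ![x, y] (MvPolynomial.pderiv 0 G) ≠ 0 ∨
          MvPolynomial.eval ![x, y] (MvPolynomial.pderiv 1 G) ≠ 0))
    ∧ (∀ x y : ℝ, MvPolynomial.eval ![x, y] G = 0 →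
        MvPolynomial.eval ![x, y] (MvPolynomial.pderiv 0 G) = 0 → x = 0) := by
  set a : ℕ → ℝ := fun i => i + ((d : ℝ) - 1 - k + j) / 2
  simp only [centroFactor_eq] at hG
  have hpos : ∀ i ∈ Icc 1 (k - j), 0 < a i := fun i hi => by
    have hi : (1 : ℝ) ≤ i := by exact_mod_cast (mem_Icc.1 hi).1
    have hkd : (k : ℝ) ≤ d := by exact_mod_cast hkd
    have hj : (0 : ℝ) ≤ j := j.cast_nonneg
    simp only [a]
    linarith
  have hinj : Set.InjOn a (Icc 1 (k - j)) := fun p _ q _ h => by simpa [a] using h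
  have hs : (Icc 1 (k - j)).Nonempty := nonempty_Icc.2 (by omega)
  refine ⟨fun x y hxy => ?_, fun x y hxy hx => ?_⟩
  · rcases eq_or_ne y 0 with rfl | hy
    · exact .inl (eval_pderiv_zero_axis_ne_zero hG hpos hinj hs hxy)
    rcases eq_or_ne x 0 with rfl | hx
    · exact .inr (eval_pderiv_one_ne_zero_of_eval_zero_eq_zero hG hpos hs hy hxy)
    · exact .inl (eval_pderiv_zero_ne_zero_of_ne_zero hG hpos hs hy hx hxy)
  · by_contra hx0
    rcases eq_or_ne y 0 with rfl | hy
    · exact eval_pderiv_zero_axis_ne_zero hG hpos hinj hs hxy hx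
    · exact eval_pderiv_zero_ne_zero_of_ne_zero hG hpos hs hy hx0 hxy hx

/-- Proposition 4.4: smoothness of the curve `𝒟_{j,k}` and location of its
horizontal tangents. Here `G ∈ ℝ[X,Y]` is the defining polynomial, characterized by
`y · G(x,y) = Im ∏_{i=1}^{n+1} ((x+iy) - a_i)((x-iy) + a_i)` with
`a_i = i + (d-1-k+j)/2` and `n = k-j-1`. -/
theorem stmt_11 (d j k : ℕ) (hd : 1 ≤ d) (hjk : j < k) (hkd : k ≤ d)
    (hn : 1 ≤ k - j - 1)
    (G : MvPolynomial (Fin 2) ℝ)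
    (hG : ∀ x y : ℝ,
      y * MvPolynomial.eval ![x, y] G =
        (∏ i ∈ Finset.Icc 1 (k - j),
          ((((x : ℂ) + y * Complex.I) -
              (((i : ℝ) + ((d : ℝ) - 1 - k + j) / 2 : ℝ) : ℂ)) *
            (((x : ℂ) - y * Complex.I) +
              (((i : ℝ) + ((d : ℝ) - 1 - k + j) / 2 : ℝ) : ℂ)))).im) :
    (∀ x y : ℝ, MvPolynomial.eval ![x, y] G = 0 →
        (MvPolynomial.eval ![x, y] (MvPolynomial.pderiv 0 G) ≠ 0 ∨
          MvPolynomial.eval ![x, y] (MvPolynomial.pderiv 1 G) ≠ 0))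
    ∧ (∀ x y : ℝ, MvPolynomial.eval ![x, y] G = 0 →
        MvPolynomial.eval ![x, y] (MvPolynomial.pderiv 0 G) = 0 → x = 0) :=
  stmt_11_general d j k hjk hkd G hG
end

section
/- Let d ≥ 1 be an integer, and let 0 ≤ j ≤ j' < k' ≤ k ≤ d and 1 ≤ l ≤ k'−j'−1 be integers. For every complex number z with Im z > 0, if A(j',k';z) = lπ, then π ≤ A(j,k;z) ≤ (k−j−1)π. -/
/-- The angle sum `A(j,k;z) = Σ_{m=j}^{k-1} (arg(z-m) - arg(z+d-m))`. -/
noncomputable def angleSum (d j k : ℕ) (z : ℂ) : ℝ :=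
  ∑ m ∈ Finset.Icc j (k - 1), (Complex.arg (z - m) - Complex.arg (z + d - m))

/-!
Each summand `arg (z - m) - arg (z + d - m)` lies in `[0, π]`, because `z - m` and `z + d - m`
lie on one horizontal line in the upper half-plane and `arg` decreases along it. Hence
`A(j,k;z) ≥ A(j',k';z) = lπ ≥ π`, and the `(k - j) - (k' - j')` extra summands add at most `π`
each, so `A(j,k;z) ≤ (l + (k - j) - (k' - j'))π ≤ (k - j - 1)π`.
-/

open Complex Finset Real

theorem Complex.arg_le_arg_of_im_eq_of_re_le {w₁ w₂ : ℂ} (him : w₁.im = w₂.im)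
    (hpos : 0 < w₁.im) (hre : w₁.re ≤ w₂.re) : arg w₂ ≤ arg w₁ := by
  have hw₁ : w₁ ≠ 0 := fun h => by simp [h] at hpos
  have hw₂ : w₂ ≠ 0 := fun h => by rw [him, h] at hpos; simp at hpos
  by_contra! hlt
  have hneg : Real.sin (arg w₁ - arg w₂) < 0 := by
    refine sin_neg_of_neg_of_neg_pi_lt (sub_neg.2 hlt) ?_
    linarith [arg_nonneg_iff.2 hpos.le, arg_lt_pi_iff.2 (Or.inr (him ▸ hpos.ne'))]
  -- `sin (arg w₁ - arg w₂)` is the cross product of the unit vectors `w₁ / ‖w₁‖`, `w₂ / ‖w₂‖`.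
  have hsin : Real.sin (arg w₁ - arg w₂) = w₁.im * (w₂.re - w₁.re) / (‖w₁‖ * ‖w₂‖) := by
    rw [Real.sin_sub, sin_arg, sin_arg, cos_arg hw₁, cos_arg hw₂, ← him]
    field_simp
  have : 0 ≤ w₁.im * (w₂.re - w₁.re) / (‖w₁‖ * ‖w₂‖) := by
    have := sub_nonneg.2 hre
    positivity
  linarith

lemma angleSum_term_nonneg (d m : ℕ) {z : ℂ} (hz : 0 < z.im) :
    0 ≤ arg (z - m) - arg (z + d - m) :=
  sub_nonneg.2 <| arg_le_arg_of_im_eq_of_re_le (by simp) (by simpa using hz) (by simp)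

lemma angleSum_term_le_pi (d m : ℕ) {z : ℂ} (hz : 0 < z.im) :
    arg (z - m) - arg (z + d - m) ≤ π := by
  have : 0 ≤ arg (z + d - m) := arg_nonneg_iff.2 (by simpa using hz.le)
  linarith [arg_le_pi (z - m)]

lemma angleSum_eq_sum_Ico (d j : ℕ) {k : ℕ} (hk : 0 < k) (z : ℂ) :
    angleSum d j k z = ∑ m ∈ Ico j k, (arg (z - m) - arg (z + d - m)) := by
  rw [angleSum, Icc_sub_one_right_eq_Ico_of_not_isMin (by simpa using hk.ne')]

lemma Finset.sum_le_sum_add_card_sdiff_mul {ι : Type*} [DecidableEq ι] {s t : Finset ι}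
    {f : ι → ℝ} {c : ℝ} (hst : s ⊆ t) (hfc : ∀ i ∈ t, f i ≤ c) :
    ∑ i ∈ t, f i ≤ ∑ i ∈ s, f i + ((#t - #s : ℕ) : ℝ) * c := by
  rw [← sum_sdiff hst, add_comm, ← card_sdiff_of_subset hst, ← nsmul_eq_mul]
  gcongr
  exact sum_le_card_nsmul _ _ _ fun i hi => hfc i (sdiff_subset hi)

theorem stmt_12_general (d j j' k' k l : ℕ) (hjj' : j ≤ j') (hj'k' : j' < k')
    (hk'k : k' ≤ k) (hl : 1 ≤ l) (hl' : l ≤ k' - j' - 1)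
    (z : ℂ) (hz : 0 < z.im)
    (hA : angleSum d j' k' z = l * Real.pi) :
    Real.pi ≤ angleSum d j k z ∧
      angleSum d j k z ≤ ((k - j - 1 : ℕ) : ℝ) * Real.pi := by
  have hk' : 0 < k' := Nat.zero_lt_of_lt hj'k'
  rw [angleSum_eq_sum_Ico d j' hk'] at hA
  rw [angleSum_eq_sum_Ico d j (hk'.trans_le hk'k)]
  have hsub : Ico j' k' ⊆ Ico j k := Ico_subset_Ico hjj' hk'k
  have hlow := sum_le_sum_of_subset_of_nonneg hsub fun m _ _ => angleSum_term_nonneg d m hz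
  have hup := sum_le_sum_add_card_sdiff_mul hsub fun m _ => angleSum_term_le_pi d m hz
  rw [hA, Nat.card_Ico, Nat.card_Ico] at hup
  rw [hA] at hlow
  have hcount : l + ((k - j) - (k' - j')) ≤ k - j - 1 := by omega
  constructor
  · calc π = (1 : ℕ) * π := by simp
      _ ≤ l * π := by gcongr
      _ ≤ _ := hlow
  · calc _ ≤ _ := hup
      _ = ((l + ((k - j) - (k' - j')) : ℕ) : ℝ) * π := by push_cast; ring
      _ ≤ _ := by gcongr

/-- First containment of Proposition 4.7: the curve `𝒟_{j',k'}` lies in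
`cl 𝒟_{j,k;1} ∖ cl 𝒟_{j,k;k-j-1}` (in the upper half-plane). -/
theorem stmt_12 (d j j' k' k l : ℕ) (hd : 1 ≤ d) (hjj' : j ≤ j') (hj'k' : j' < k')
    (hk'k : k' ≤ k) (hkd : k ≤ d) (hl : 1 ≤ l) (hl' : l ≤ k' - j' - 1)
    (z : ℂ) (hz : 0 < z.im)
    (hA : angleSum d j' k' z = l * Real.pi) :
    Real.pi ≤ angleSum d j k z ∧
      angleSum d j k z ≤ ((k - j - 1 : ℕ) : ℝ) * Real.pi :=
  stmt_12_general d j j' k' k l hjj' hj'k' hk'k hl hl' z hz hA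
end

section
/- Let d ≥ 1 be an integer and z a complex number with Im z > 0 such that A(0,d;z) < π. Write w_m := C_d(z+d−m) ∈ ℂ for m = 0, …, d, regarded as vectors in ℝ². Then: (1) for all 0 ≤ m < m' ≤ d, Im( conj(w_m) · w_{m'} ) > 0 (in particular w_0 and w_d are linearly independent over ℝ and the w_m appear in strict counterclockwise cyclic order); (2) for every 0 ≤ m ≤ d there exist real numbers s, t ≥ 0 with w_m = s·w_0 + t·w_d, i.e., every w_m lies in the pointed convex cone spanned by w_0 and w_d. -/
open ComplexConjugate

/-!
Consecutive values satisfy `w_{m+1} = w_m · r_m` with `r_m = (z - m)/(z + d - m)`, a number in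
the upper half plane of argument `arg (z - m) - arg (z + d - m)`. Hence `w_{m'} / w_m` is a
product of such ratios, and as long as the total angle stays below `π` their arguments simply
add up, so `w_{m'} / w_m` lies strictly in the upper half plane. The cone statement is then
Cramer's rule in `ℝ²`.
-/

open Finset

namespace Complex

theorem ne_zero_of_im_pos {x : ℂ} (hx : 0 < x.im) : x ≠ 0 := fun h => by simp [h] at hx

theorem im_pos_iff_arg_mem_Ioo (x : ℂ) : 0 < x.im ↔ 0 < arg x ∧ arg x < Real.pi := by
  constructor
  · intro hx
    refine ⟨(arg_nonneg_iff.2 hx.le).lt_of_ne fun h => ?_, arg_lt_pi_iff.2 (Or.inr hx.ne')⟩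
    exact hx.ne' (arg_eq_zero_iff.1 h.symm).2
  · rintro ⟨h0, hπ⟩
    have hx : x ≠ 0 := by rintro rfl; simp at h0
    rw [← norm_mul_sin_arg]
    exact mul_pos (norm_pos_iff.2 hx) (Real.sin_pos_of_pos_of_lt_pi h0 hπ)

theorem arg_div_of_im_pos {u v : ℂ} (hu : 0 < u.im) (hv : 0 < v.im) :
    arg (u / v) = arg u - arg v := by
  obtain ⟨hu0, huπ⟩ := (im_pos_iff_arg_mem_Ioo u).1 hu
  obtain ⟨hv0, hvπ⟩ := (im_pos_iff_arg_mem_Ioo v).1 hv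
  have hinv : arg v⁻¹ = -arg v := by rw [arg_inv, if_neg hvπ.ne]
  rw [div_eq_mul_inv, arg_mul (ne_zero_of_im_pos hu) (inv_ne_zero (ne_zero_of_im_pos hv)),
    hinv, sub_eq_add_neg]
  rw [hinv]
  constructor <;> linarith

theorem arg_prod_eq_sum_arg {ι : Type*} (s : Finset ι) {f : ι → ℂ} (hf₀ : ∀ i ∈ s, f i ≠ 0)
    (hf : ∀ i ∈ s, 0 ≤ arg (f i)) (hs : ∑ i ∈ s, arg (f i) ≤ Real.pi) :
    arg (∏ i ∈ s, f i) = ∑ i ∈ s, arg (f i) := by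
  induction s using Finset.cons_induction with
  | empty => simp
  | cons a s _ ih =>
    simp only [mem_cons, forall_eq_or_imp, sum_cons, prod_cons] at hf₀ hf hs ⊢
    have hsum_nonneg : 0 ≤ ∑ i ∈ s, arg (f i) := sum_nonneg hf.2
    have ih := ih hf₀.2 hf.2 (by linarith)
    rw [arg_mul hf₀.1 (prod_ne_zero_iff.2 hf₀.2), ih]
    rw [ih]
    constructor <;> linarith [Real.pi_pos]

theorem im_prod_pos {ι : Type*} {s : Finset ι} (hs : s.Nonempty) {f : ι → ℂ}
    (hf : ∀ i ∈ s, 0 < (f i).im) (hsum : ∑ i ∈ s, arg (f i) < Real.pi) :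
    0 < (∏ i ∈ s, f i).im := by
  have harg := fun i hi => (im_pos_iff_arg_mem_Ioo (f i)).1 (hf i hi)
  rw [im_pos_iff_arg_mem_Ioo,
    arg_prod_eq_sum_arg s (fun i hi => ne_zero_of_im_pos (hf i hi)) (fun i hi => (harg i hi).1.le)
      hsum.le]
  exact ⟨sum_pos (fun i hi => (harg i hi).1) hs, hsum⟩

theorem im_div_add_ofReal_pos {u : ℂ} {t : ℝ} (hu : 0 < u.im) (ht : 0 < t) :
    0 < (u / (u + t)).im := by
  have hne : 0 < normSq (u + t) := normSq_pos.2 (ne_zero_of_im_pos (by simpa using hu))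
  rw [div_im, div_sub_div_same]
  apply div_pos _ hne
  simp only [add_im, ofReal_im, add_zero, add_re, ofReal_re]
  nlinarith

theorem im_conj_mul_self (u : ℂ) : (conj u * u).im = 0 := by
  rw [conj_mul']; norm_cast

/-- Cramer's rule in `ℝ² ≅ ℂ`, where `(conj u * v).im` is the determinant of `(u, v)`. -/
theorem exists_nonneg_combination_of_im_conj_mul {u v x : ℂ} (huv : 0 < (conj u * v).im)
    (hux : 0 ≤ (conj u * x).im) (hxv : 0 ≤ (conj x * v).im) :
    ∃ s t : ℝ, 0 ≤ s ∧ 0 ≤ t ∧ x = s * u + t * v := by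
  refine ⟨(conj x * v).im / (conj u * v).im, (conj u * x).im / (conj u * v).im,
    div_nonneg hxv huv.le, div_nonneg hux huv.le, ?_⟩
  have cramer : ((conj x * v).im : ℂ) * u + ((conj u * x).im : ℂ) * v
      = ((conj u * v).im : ℂ) * x := by
    apply Complex.ext <;> simp [mul_im, mul_re] <;> ring
  have hD : ((conj u * v).im : ℂ) ≠ 0 := ofReal_ne_zero.2 huv.ne'
  apply mul_left_cancel₀ hD
  rw [← cramer, ofReal_div, ofReal_div, mul_add, ← mul_assoc, ← mul_assoc, mul_div_cancel₀ _ hD,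
    mul_div_cancel₀ _ hD]

end Complex

open Complex

theorem binomC_ne_zero (d : ℕ) {w : ℂ} (hw : 0 < w.im) : binomC d w ≠ 0 := by
  exact div_ne_zero (prod_ne_zero_iff.2 fun i _ => ne_zero_of_im_pos (by simpa using hw))
    (by exact_mod_cast d.factorial_ne_zero)

theorem binomC_add_one_mul (d : ℕ) (w : ℂ) :
    binomC d (w + 1) * (w + 1 - d) = binomC d w * (w + 1) := by
  unfold binomC
  rw [div_mul_eq_mul_div, div_mul_eq_mul_div]
  congr 1
  rw [← prod_range_succ (fun i : ℕ => w + 1 - i), prod_range_succ']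
  push_cast
  congr 1
  · exact prod_congr rfl fun i _ => by ring
  · ring

theorem binomC_sub_natCast_eq_mul_prod (d : ℕ) {z : ℂ} (hz : 0 < z.im) {m m' : ℕ} (h : m ≤ m') :
    binomC d (z + d - m') = binomC d (z + d - m) * ∏ j ∈ Ico m m', (z - j) / (z + d - j) := by
  induction m', h using Nat.le_induction with
  | base => simp
  | succ k hk ih =>
    have hne : z + d - k ≠ 0 := ne_zero_of_im_pos (by simpa using hz)
    have hrec := binomC_add_one_mul d (z + d - (k + 1 : ℕ))
    push_cast at hrec ⊢
    rw [show z + d - (k + 1) + 1 = z + d - k by ring] at hrec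
    rw [prod_Ico_succ_top hk, ← mul_assoc, ← ih, ← mul_div_assoc, eq_div_iff hne]
    linear_combination -hrec

/-- Corollary 4.8: outside `cl 𝒟_{0,d;1}` (i.e. when `A(0,d;z) < π`), the vectors
`w_m = C_d(z+d-m)` appear in strict counterclockwise order, and the cone they span
is pointed with facets spanned by `w_0` and `w_d`. -/
theorem stmt_14 (d : ℕ) (hd : 1 ≤ d) (z : ℂ) (hz : 0 < z.im)
    (hA : angleSum d 0 d z < Real.pi) :
    (∀ m m' : ℕ, m < m' → m' ≤ d →
        0 < (conj (binomC d (z + d - m)) * binomC d (z + d - m')).im)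
    ∧ (∀ m : ℕ, m ≤ d → ∃ s t : ℝ, 0 ≤ s ∧ 0 ≤ t ∧
        binomC d (z + d - m)
          = (s : ℂ) * binomC d (z + d - (0 : ℕ)) + (t : ℂ) * binomC d (z + d - (d : ℕ))) := by
  set w : ℕ → ℂ := fun m => binomC d (z + d - m)
  set r : ℕ → ℂ := fun j => (z - j) / (z + d - j)
  have hr_im (j : ℕ) : 0 < (r j).im := by
    simpa only [r, sub_add_eq_add_sub, ofReal_natCast] using
      im_div_add_ofReal_pos (u := z - j) (by simpa using hz) (Nat.cast_pos.2 hd)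
  have hr_sum : ∑ j ∈ range d, arg (r j) < Real.pi := by
    rw [angleSum, ← Nat.range_eq_Icc_zero_sub_one d (by omega)] at hA
    convert hA using 2 with j
    exact arg_div_of_im_pos (by simpa using hz) (by simpa using hz)
  have hw_order (m m' : ℕ) (hm : m < m') (hm' : m' ≤ d) : 0 < (conj (w m) * w m').im := by
    have hP : 0 < (∏ j ∈ Ico m m', r j).im := by
      refine im_prod_pos (nonempty_Ico.2 hm) (fun j _ => hr_im j) (lt_of_le_of_lt ?_ hr_sum)
      exact sum_le_sum_of_subset_of_nonneg (fun j hj => mem_range.2 ((mem_Ico.1 hj).2.trans_le hm'))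
        fun j _ _ => ((im_pos_iff_arg_mem_Ioo _).1 (hr_im j)).1.le
    have hw0 : w m ≠ 0 := binomC_ne_zero d (by simpa using hz)
    rw [show w m' = w m * ∏ j ∈ Ico m m', r j from binomC_sub_natCast_eq_mul_prod d hz hm.le,
      ← mul_assoc, conj_mul', ← ofReal_pow, im_ofReal_mul]
    exact mul_pos (by positivity) hP
  have hw_order' (m m' : ℕ) (hm : m ≤ m') (hm' : m' ≤ d) : 0 ≤ (conj (w m) * w m').im := by
    rcases hm.lt_or_eq with hm | rfl
    · exact (hw_order m m' hm hm').le
    · exact (im_conj_mul_self _).ge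
  exact ⟨hw_order, fun m hm => exists_nonneg_combination_of_im_conj_mul
    (hw_order 0 d hd le_rfl) (hw_order' 0 m (Nat.zero_le m) hm) (hw_order' m d hm le_rfl)⟩
end

section
/- Let d ≥ 1 be an integer and a_0, …, a_d real numbers with a_m ≥ 0 for all m and not all zero. If x is a real number with Σ_{m=0}^d a_m · C_d(x+d−m) = 0, then −d ≤ x ≤ d−1. -/
/-- The binomial coefficient polynomial `C_d(w) = (1/d!) ∏_{i=0}^{d-1} (w - i)`,
evaluated at real arguments. -/
noncomputable def binomR (d : ℕ) (w : ℝ) : ℝ :=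
  (∏ i ∈ Finset.range d, (w - i)) / (Nat.factorial d)

lemma binomR_pos {d : ℕ} {w : ℝ} (h : (d : ℝ) - 1 < w) : 0 < binomR d w := by
  apply div_pos
  · apply Finset.prod_pos
    intro i hi
    have : (i : ℝ) ≤ (d : ℝ) - 1 := by
      have : (i : ℕ) + 1 ≤ d := Finset.mem_range.mp hi
      have := Nat.cast_le (α := ℝ).mpr this
      push_cast at this
      linarith
    linarith
  · exact_mod_cast Nat.factorial_pos d

lemma binomR_neg_pos {d : ℕ} {w : ℝ} (h : w < 0) : 0 < (-1 : ℝ) ^ d * binomR d w := by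
  have key : (-1 : ℝ) ^ d * ∏ i ∈ Finset.range d, (w - i) =
      ∏ i ∈ Finset.range d, ((i : ℝ) - w) := by
    calc (-1 : ℝ) ^ d * ∏ i ∈ Finset.range d, (w - i)
        = (∏ _i ∈ Finset.range d, (-1 : ℝ)) * ∏ i ∈ Finset.range d, (w - i) := by
          rw [Finset.prod_const, Finset.card_range]
      _ = ∏ i ∈ Finset.range d, (-1 : ℝ) * (w - i) := Finset.prod_mul_distrib.symm
      _ = ∏ i ∈ Finset.range d, ((i : ℝ) - w) := Finset.prod_congr rfl fun i _ => by ring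
  have hpos : 0 < ∏ i ∈ Finset.range d, ((i : ℝ) - w) := by
    apply Finset.prod_pos
    intro i _
    have : (0 : ℝ) ≤ i := Nat.cast_nonneg i
    linarith
  unfold binomR
  rw [mul_div_assoc', key]
  exact div_pos hpos (by exact_mod_cast Nat.factorial_pos d)

/-- Real-root part of Theorem 4.10: all real roots of a nonzero polynomial with
nonnegative coefficients in the binomial coefficient basis lie in `[-d, d-1]`. -/
theorem stmt_17 (d : ℕ) (hd : 1 ≤ d) (a : Fin (d + 1) → ℝ)
    (ha : ∀ m, 0 ≤ a m) (hne : ∃ m, a m ≠ 0) (x : ℝ)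
    (hx : ∑ m, a m * binomR d (x + d - (m : ℕ)) = 0) :
    -(d : ℝ) ≤ x ∧ x ≤ (d : ℝ) - 1 := by
  obtain ⟨m₀, hm₀⟩ := hne
  have hm₀pos : 0 < a m₀ := lt_of_le_of_ne (ha m₀) (Ne.symm hm₀)
  constructor
  · by_contra hlt
    push_neg at hlt
    have hsum : 0 < ∑ m : Fin (d + 1), a m * ((-1 : ℝ) ^ d * binomR d (x + d - (m : ℕ))) := by
      apply Finset.sum_pos'
      · intro m _
        have : x + d - (m : ℕ) < 0 := by
          have : (0 : ℝ) ≤ (m : ℕ) := Nat.cast_nonneg _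
          linarith
        exact mul_nonneg (ha m) (le_of_lt (binomR_neg_pos this))
      · refine ⟨m₀, Finset.mem_univ _, ?_⟩
        have : x + d - (m₀ : ℕ) < 0 := by
          have : (0 : ℝ) ≤ ((m₀ : ℕ) : ℝ) := Nat.cast_nonneg _
          linarith
        exact mul_pos hm₀pos (binomR_neg_pos this)
    have : ∑ m : Fin (d + 1), a m * ((-1 : ℝ) ^ d * binomR d (x + d - (m : ℕ))) =
        (-1 : ℝ) ^ d * ∑ m : Fin (d + 1), a m * binomR d (x + d - (m : ℕ)) := by
      rw [Finset.mul_sum]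
      exact Finset.sum_congr rfl fun m _ => by ring
    rw [this, hx, mul_zero] at hsum
    exact lt_irrefl 0 hsum
  · by_contra hlt
    push_neg at hlt
    have hsum : 0 < ∑ m : Fin (d + 1), a m * binomR d (x + d - (m : ℕ)) := by
      apply Finset.sum_pos'
      · intro m _
        have hw : (d : ℝ) - 1 < x + d - (m : ℕ) := by
          have : (m : ℕ) ≤ d := Nat.lt_succ_iff.mp m.isLt
          have := Nat.cast_le (α := ℝ).mpr this
          linarith
        exact mul_nonneg (ha m) (le_of_lt (binomR_pos hw))
      · refine ⟨m₀, Finset.mem_univ _, ?_⟩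
        have hw : (d : ℝ) - 1 < x + d - (m₀ : ℕ) := by
          have : (m₀ : ℕ) ≤ d := Nat.lt_succ_iff.mp m₀.isLt
          have := Nat.cast_le (α := ℝ).mpr this
          linarith
        exact mul_pos hm₀pos (binomR_pos hw)
    rw [hx] at hsum
    exact lt_irrefl 0 hsum
end

section
/- Let d ≥ 1 be an integer. For every real number x with −d ≤ x ≤ d−1, there exist real numbers a_0, …, a_d with a_m ≥ 0 for all m, not all zero, such that Σ_{m=0}^d a_m · C_d(x+d−m) = 0. -/
lemma binomR_key (d : ℕ) (hd : 1 ≤ d) (w : ℝ) (h0 : 0 ≤ w) (h1 : w ≤ d) :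
    binomR d w * binomR d (w - 1) ≤ 0 := by
  unfold binomR
  rw [div_mul_div_comm]
  apply div_nonpos_of_nonpos_of_nonneg
  · obtain ⟨e, rfl⟩ : ∃ e, d = e + 1 := ⟨d - 1, by omega⟩
    have hP : (∏ i ∈ Finset.range (e + 1), (w - i))
        = w * ∏ i ∈ Finset.range e, (w - (i + 1 : ℕ)) := by
      rw [Finset.prod_range_succ']
      push_cast
      ring
    have hQ : (∏ i ∈ Finset.range (e + 1), (w - 1 - i))
        = (∏ i ∈ Finset.range e, (w - (i + 1 : ℕ))) * (w - (e + 1 : ℕ)) := by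
      rw [Finset.prod_range_succ]
      have h2 : w - 1 - (e : ℝ) = w - ((e + 1 : ℕ) : ℝ) := by push_cast; ring
      rw [h2]
      congr 1
      apply Finset.prod_congr rfl
      intro i _
      push_cast
      ring
    rw [hP, hQ]
    have hwd : w - ((e + 1 : ℕ) : ℝ) ≤ 0 := by push_cast at h1 ⊢; linarith
    have := mul_nonpos_of_nonneg_of_nonpos
      (mul_nonneg h0 (sq_nonneg (∏ i ∈ Finset.range e, (w - (i + 1 : ℕ))))) hwd
    nlinarith [this]
  · positivity

/-- Tightness of the real-root bound of Theorem 4.10: every `x ∈ [-d, d-1]` is a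
root of some nonzero polynomial with nonnegative coefficients in the binomial
coefficient basis. -/
theorem stmt_18 (d : ℕ) (hd : 1 ≤ d) (x : ℝ) (h₁ : -(d : ℝ) ≤ x)
    (h₂ : x ≤ (d : ℝ) - 1) :
    ∃ a : Fin (d + 1) → ℝ, (∀ m, 0 ≤ a m) ∧ (∃ m, a m ≠ 0) ∧
      ∑ m, a m * binomR d (x + d - (m : ℕ)) = 0 := by
  set m0 : ℕ := ⌈x⌉₊ with hm0
  have hm0d : m0 < d := by
    have : (⌈x⌉₊ : ℕ) ≤ d - 1 := by
      apply Nat.ceil_le.mpr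
      have : ((d - 1 : ℕ) : ℝ) = (d : ℝ) - 1 := by
        have : (1:ℕ) ≤ d := hd
        push_cast [Nat.cast_sub this]
        ring
      rw [this]; exact h₂
    omega
  set w : ℝ := x + d - m0 with hw
  have hw0 : 0 ≤ w := by
    rcases le_or_gt x 0 with hx | hx
    · have : m0 = 0 := Nat.ceil_eq_zero.mpr hx
      rw [hw, this]; push_cast; linarith
    · have := Nat.ceil_lt_add_one hx.le
      rw [hw]
      have hd1 : (1:ℝ) ≤ d := by exact_mod_cast hd
      linarith
  have hw1 : w ≤ d := by
    have := Nat.le_ceil x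
    rw [hw]; linarith
  set u : ℝ := binomR d w with hu
  set v : ℝ := binomR d (w - 1) with hv
  have huv : u * v ≤ 0 := binomR_key d hd w hw0 hw1
  set i0 : Fin (d + 1) := ⟨m0, by omega⟩ with hi0
  set i1 : Fin (d + 1) := ⟨m0 + 1, by omega⟩ with hi1
  have hne : i0 ≠ i1 := by
    simp [hi0, hi1, Fin.ext_iff]
  refine ⟨fun j => if j = i0 then |v| + (if u = 0 then 1 else 0)
    else if j = i1 then |u| else 0, ?_, ?_, ?_⟩
  · intro m
    by_cases h : m = i0 <;> by_cases h' : m = i1 <;> simp [h, h'] <;> positivity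
  · by_cases hu0 : u = 0
    · exact ⟨i0, by simp [hu0]; positivity⟩
    · exact ⟨i1, by simp [hne.symm, hu0]⟩
  · have hsplit : ∀ j : Fin (d + 1),
        (if j = i0 then |v| + (if u = 0 then 1 else 0) else if j = i1 then |u| else 0)
          * binomR d (x + d - (j : ℕ))
        = (if j = i0 then (|v| + (if u = 0 then 1 else 0)) * binomR d (x + d - (j : ℕ)) else 0)
          + (if j = i1 then |u| * binomR d (x + d - (j : ℕ)) else 0) := by
      intro j
      by_cases h : j = i0
      · subst h; simp [hne]
      · by_cases h' : j = i1
        · subst h'; simp [Ne.symm hne]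
        · simp [h, h']
    simp only [hsplit, Finset.sum_add_distrib, Finset.sum_ite_eq', Finset.mem_univ, if_true]
    have hfi0 : binomR d (x + d - ((i0 : Fin (d+1)) : ℕ)) = u := by
      rw [hu, hw]
    have hfi1 : binomR d (x + d - ((i1 : Fin (d+1)) : ℕ)) = v := by
      rw [hv, hw]
      congr 1
      simp [hi1]
      ring
    rw [hfi0, hfi1]
    by_cases hu0 : u = 0
    · simp [hu0]
    · simp only [hu0, if_false, add_zero]
      rcases le_or_gt u 0 with h | h
      · have hlt : u < 0 := lt_of_le_of_ne h hu0
        have hv0 : 0 ≤ v := by nlinarith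
        rw [abs_of_nonpos h, abs_of_nonneg hv0]; ring
      · have hv0 : v ≤ 0 := by nlinarith
        rw [abs_of_nonneg h.le, abs_of_nonpos hv0]; ring
end
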